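/- arXiv:1802.05010 — 7 statements merged into one kernel-verified Lean document; each statement's English description precedes it below -/
import Mathlib

section
/- Let K be a field, d ≥ 0 an integer, λ ∈ K∖{0}. Let A, A′, B ∈ K[[x,y,u,v,w]] be units (nonzero constant coefficient) and let Q, Q′ ∈ K[[x,y,u,v,w]] be arbitrary. Then ord( w^d·(λ + u^{2d+6}·Q) + x^{d+1} u^{2d+6}·A ) = d, and ord( w^d y⁴·B + w^d x^{2d+6}·Q′ + x^{2d+7}·A′ ) = d + 4. Consequently, the first blowup of the characteristic-2 example raises the residual order from d to d+4. -/
noncomputable section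

open MvPowerSeries

/-- Substitution of power series (with zero constant terms) into a multivariate power
series, defined coefficient-wise: this is the unique continuous `K`-algebra endomorphism
of `K[[x_1,…,x_n]]` sending the variable `X i` to `s i`. -/
def psSubst {K : Type*} [Field K] {n : ℕ} (s : Fin n → MvPowerSeries (Fin n) K)
    (f : MvPowerSeries (Fin n) K) : MvPowerSeries (Fin n) K := fun e =>
  ∑ d ∈ Finset.Iic (Finsupp.equivFunOnFinite.symm fun _ : Fin n => e.sum fun _ k => k),
    MvPowerSeries.coeff d f * MvPowerSeries.coeff e (∏ i, s i ^ d i)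

/-- The power series `f` does not involve the variable `X i₀`. -/
def avoids {K : Type*} [Field K] {n : ℕ} (i₀ : Fin n) (f : MvPowerSeries (Fin n) K) : Prop :=
  ∀ d : Fin n →₀ ℕ, d i₀ ≠ 0 → MvPowerSeries.coeff d f = 0

/-- The order (least total degree of an occurring monomial) of `f` equals `m`. -/
def ordIs {K : Type*} [Field K] {n : ℕ} (f : MvPowerSeries (Fin n) K) (m : ℕ) : Prop :=
  (∃ d : Fin n →₀ ℕ, (d.sum fun _ k => k) = m ∧ MvPowerSeries.coeff d f ≠ 0) ∧
  ∀ d : Fin n →₀ ℕ, MvPowerSeries.coeff d f ≠ 0 → m ≤ d.sum fun _ k => k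

lemma sum_single5 (i : Fin 5) (n : ℕ) : ((Finsupp.single i n).sum fun _ k => k) = n :=
  Finsupp.sum_single_index rfl

lemma sum_le_of_le5 {a b : Fin 5 →₀ ℕ} (h : a ≤ b) :
    (a.sum fun _ k => k) ≤ b.sum fun _ k => k := by
  obtain ⟨c, rfl⟩ := le_iff_exists_add.mp h
  rw [Finsupp.sum_add_index' (fun _ => rfl) (fun _ _ _ => rfl)]
  exact Nat.le_add_right _ _

lemma coeff_mono_mul {K : Type*} [Field K] (n e : Fin 5 →₀ ℕ) (g : MvPowerSeries (Fin 5) K) :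
    coeff e (monomial n (1:K) * g) = if n ≤ e then coeff (e - n) g else 0 := by
  rw [coeff_monomial_mul]; simp


/-- In `K[[x,y,u,v,w]]` (with `x = X 0`, `y = X 1`, `u = X 2`,
`v = X 3`, `w = X 4`), for units `A, A', B` and arbitrary `Q, Q'`:
`ord(w^d·(λ + u^{2d+6}·Q) + x^{d+1}u^{2d+6}·A) = d` and
`ord(w^d y⁴·B + w^d x^{2d+6}·Q' + x^{2d+7}·A') = d + 4`.  Hence the first blowup of the
characteristic-2 example raises the residual order from `d` to `d + 4`. -/
theorem char2_residual_order_increase (K : Type*) [Field K]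
    (d : ℕ) (lam : K) (hlam : lam ≠ 0)
    (A A' B Q Q' : MvPowerSeries (Fin 5) K)
    (hA : constantCoeff A ≠ 0)
    (hA' : constantCoeff A' ≠ 0)
    (hB : constantCoeff B ≠ 0) :
    ordIs (X 4 ^ d * (C lam + X 2 ^ (2 * d + 6) * Q) +
        X 0 ^ (d + 1) * X 2 ^ (2 * d + 6) * A) d ∧
    ordIs (X 4 ^ d * X 1 ^ 4 * B + X 4 ^ d * X 0 ^ (2 * d + 6) * Q' +
        X 0 ^ (2 * d + 7) * A') (d + 4) := by
  have hrw1 : (X 4 ^ d * (C lam + X 2 ^ (2 * d + 6) * Q) +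
      X 0 ^ (d + 1) * X 2 ^ (2 * d + 6) * A) =
      monomial (Finsupp.single 4 d) 1 *
        (C lam + monomial (Finsupp.single 2 (2*d+6)) 1 * Q) +
      monomial (Finsupp.single 0 (d+1) + Finsupp.single 2 (2*d+6)) 1 * A := by
    simp only [X_pow_eq, monomial_mul_monomial, one_mul]
  have hrw2 : (X 4 ^ d * X 1 ^ 4 * B + X 4 ^ d * X 0 ^ (2 * d + 6) * Q' +
      X 0 ^ (2 * d + 7) * A') =
      monomial (Finsupp.single 4 d + Finsupp.single 1 4) 1 * B +
      monomial (Finsupp.single 4 d + Finsupp.single 0 (2*d+6)) 1 * Q' +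
      monomial (Finsupp.single 0 (2*d+7)) 1 * A' := by
    simp only [X_pow_eq, monomial_mul_monomial, one_mul]
  rw [hrw1, hrw2]
  constructor
  · constructor
    · refine ⟨Finsupp.single 4 d, sum_single5 4 d, ?_⟩
      rw [map_add, coeff_mono_mul, coeff_mono_mul, if_pos le_rfl,
        if_neg ?_, add_zero, tsub_self, map_add, coeff_mono_mul, if_neg ?_, add_zero,
        coeff_zero_C]
      · exact hlam
      · intro h
        have := Finsupp.le_def.mp h 2
        simp [Finsupp.single_apply] at this
      · intro h
        have := Finsupp.le_def.mp h 0
        simp [Finsupp.single_apply] at this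
    · intro e he
      by_cases h1 : Finsupp.single 4 d ≤ e
      · have := sum_le_of_le5 h1
        rw [sum_single5] at this; exact this
      by_cases h2 : Finsupp.single 0 (d+1) + Finsupp.single 2 (2*d+6) ≤ e
      · have := sum_le_of_le5 (le_trans le_self_add h2)
        rw [sum_single5] at this; omega
      · exfalso; apply he
        rw [map_add, coeff_mono_mul, coeff_mono_mul, if_neg h1, if_neg h2, add_zero]
  · constructor
    · refine ⟨Finsupp.single 4 d + Finsupp.single 1 4, ?_, ?_⟩
      · rw [Finsupp.sum_add_index' (fun _ => rfl) (fun _ _ _ => rfl),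
          sum_single5, sum_single5]
      · rw [map_add, map_add, coeff_mono_mul, coeff_mono_mul, coeff_mono_mul,
          if_pos le_rfl, if_neg ?_, if_neg ?_, add_zero, add_zero, tsub_self,
          coeff_zero_eq_constantCoeff]
        · exact hB
        · intro h
          have := Finsupp.le_def.mp h 0
          simp [Finsupp.single_apply] at this
        · intro h
          have := Finsupp.le_def.mp h 0
          simp [Finsupp.single_apply] at this
    · intro e he
      by_cases h1 : Finsupp.single 4 d + Finsupp.single 1 4 ≤ e
      · have := sum_le_of_le5 h1
        rw [Finsupp.sum_add_index' (fun _ => rfl) (fun _ _ _ => rfl),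
          sum_single5, sum_single5] at this
        exact this
      by_cases h2 : Finsupp.single 4 d + Finsupp.single 0 (2*d+6) ≤ e
      · have := sum_le_of_le5 h2
        rw [Finsupp.sum_add_index' (fun _ => rfl) (fun _ _ _ => rfl),
          sum_single5, sum_single5] at this
        omega
      by_cases h3 : Finsupp.single 0 (2*d+7) ≤ e
      · have := sum_le_of_le5 h3
        rw [sum_single5] at this; omega
      · exfalso; apply he
        rw [map_add, map_add, coeff_mono_mul, coeff_mono_mul, coeff_mono_mul,
          if_neg h1, if_neg h2, if_neg h3, add_zero, add_zero]
end
end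

section
/- Let K be a field, R = K[[z,x,y,u,v,w]], d ≥ 0 an integer, and a, r, s non-negative integers with 8s ≥ d. Let B, A ∈ K[[x,y,u,v,w]] be units. Set f = z⁸ + x^{8a+4} u^{8r+7} w^{8s−d}·( w^d y⁴ u·B + x^{d+3}·A ). Let σ_v : R → R be the substitution z↦vz, x↦vx, y↦vy, u↦vu, v↦v, w↦vw (the monomial v-chart point blowup). Then for every integer k ≥ 0, the k-fold composite satisfies σ_v^{k}(f) = v^{8k}·( z⁸ + x^{8a+4} u^{8r+7} v^{k·(8(a+r+s)+6)} w^{8s−d}·( w^d y⁴ u v^{2k}·B_k + x^{d+3}·A_k ) ), where B_k and A_k are the (unit) images of B and A under the k-fold substitution. In particular, for even d and k = d/2 the first term inside the parenthesis is w^d y⁴ u v^{d}·B_k. -/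
noncomputable section

open MvPowerSeries

namespace C2Aux
variable {K : Type*} [Field K]

/-- Sum of the coordinates other than 4. -/
def Sfn (d : Fin 6 →₀ ℕ) : ℕ := d 0 + d 1 + d 2 + d 3 + d 5

lemma Sfn_add (d e : Fin 6 →₀ ℕ) : Sfn (d + e) = Sfn d + Sfn e := by
  simp [Sfn]; ring

/-- The exponent-transformation of the blowup chart. -/
def phi (d : Fin 6 →₀ ℕ) : Fin 6 →₀ ℕ := d + Finsupp.single 4 (Sfn d)

lemma phi_add (d e : Fin 6 →₀ ℕ) : phi (d + e) = phi d + phi e := by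
  simp only [phi, Sfn_add, Finsupp.single_add]; abel

lemma phi_zero : phi (0 : Fin 6 →₀ ℕ) = 0 := by simp [phi, Sfn]

lemma phi_apply_ne (d : Fin 6 →₀ ℕ) (i : Fin 6) (h : i ≠ 4) : phi d i = d i := by
  simp [phi, Finsupp.single_apply, Ne.symm h]

lemma phi_apply4 (d : Fin 6 →₀ ℕ) : phi d 4 = d 4 + Sfn d := by
  simp [phi, Finsupp.single_apply]

lemma Sfn_phi (d : Fin 6 →₀ ℕ) : Sfn (phi d) = Sfn d := by
  simp [Sfn, phi, Finsupp.single_apply]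

/-- Partial inverse to `phi`. -/
def psi (e : Fin 6 →₀ ℕ) : Fin 6 →₀ ℕ :=
  Finsupp.equivFunOnFinite.symm fun i => if i = 4 then e 4 - Sfn e else e i

lemma psi_apply_ne (e : Fin 6 →₀ ℕ) (i : Fin 6) (h : i ≠ 4) : psi e i = e i := by
  simp [psi, h]

lemma psi_apply4 (e : Fin 6 →₀ ℕ) : psi e 4 = e 4 - Sfn e := by simp [psi]

lemma Sfn_psi (e : Fin 6 →₀ ℕ) : Sfn (psi e) = Sfn e := by
  simp [Sfn, psi]

lemma psi_phi (d : Fin 6 →₀ ℕ) : psi (phi d) = d := by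
  ext i
  by_cases h : i = 4
  · subst h; rw [psi_apply4, Sfn_phi, phi_apply4]; omega
  · rw [psi_apply_ne _ _ h, phi_apply_ne _ _ h]

lemma phi_inj : Function.Injective phi := fun a b h => by
  rw [← psi_phi a, ← psi_phi b, h]

lemma phi_psi (e : Fin 6 →₀ ℕ) (h : Sfn e ≤ e 4) : phi (psi e) = e := by
  ext i
  by_cases hi : i = 4
  · subst hi; rw [phi_apply4, Sfn_psi, psi_apply4]; omega
  · rw [phi_apply_ne _ _ hi, psi_apply_ne _ _ hi]

lemma Sfn_le_phi4 (d : Fin 6 →₀ ℕ) : Sfn (phi d) ≤ phi d 4 := by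
  rw [Sfn_phi, phi_apply4]; omega


def T (f : MvPowerSeries (Fin 6) K) : MvPowerSeries (Fin 6) K :=
  fun e => if Sfn e ≤ e 4 then coeff (psi e) f else 0

lemma coeff_T (f : MvPowerSeries (Fin 6) K) (e : Fin 6 →₀ ℕ) :
    coeff e (T f) = if Sfn e ≤ e 4 then coeff (psi e) f else 0 := rfl

lemma T_monomial (d : Fin 6 →₀ ℕ) (c : K) :
    T (monomial d c) = monomial (phi d) c := by
  ext e
  rw [coeff_T]
  by_cases h1 : Sfn e ≤ e 4
  · rw [if_pos h1, coeff_monomial, coeff_monomial]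
    by_cases h2 : psi e = d
    · rw [if_pos h2, if_pos (by rw [← h2, phi_psi e h1])]
    · rw [if_neg h2, if_neg (fun he => h2 (by rw [he, psi_phi]))]
  · rw [if_neg h1, coeff_monomial, if_neg (fun he => h1 (by rw [he]; exact Sfn_le_phi4 d))]

lemma T_add (f g : MvPowerSeries (Fin 6) K) : T (f + g) = T f + T g := by
  ext e
  simp only [coeff_T, map_add]
  split_ifs <;> simp

lemma T_one : T (1 : MvPowerSeries (Fin 6) K) = 1 := by
  rw [← monomial_zero_one, T_monomial, phi_zero, monomial_zero_one]

lemma T_mul (f g : MvPowerSeries (Fin 6) K) : T (f * g) = T f * T g := by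
  ext e
  rw [coeff_T, coeff_mul]
  by_cases he : Sfn e ≤ e 4
  · rw [if_pos he, coeff_mul]
    have step1 : (∑ p ∈ Finset.HasAntidiagonal.antidiagonal e, coeff p.1 (T f) * coeff p.2 (T g)) =
        ∑ p ∈ Finset.HasAntidiagonal.antidiagonal e,
          (if Sfn p.1 ≤ p.1 4 ∧ Sfn p.2 ≤ p.2 4 then
            coeff (psi p.1) f * coeff (psi p.2) g else 0) := by
      refine Finset.sum_congr rfl fun p _ => ?_
      by_cases h1 : Sfn p.1 ≤ p.1 4 <;> by_cases h2 : Sfn p.2 ≤ p.2 4 <;>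
        simp [coeff_T, h1, h2]
    rw [step1, ← Finset.sum_filter]
    refine (Finset.sum_nbij' (fun p => (psi p.1, psi p.2))
        (fun q => (phi q.1, phi q.2)) ?_ ?_ ?_ ?_ ?_).symm
    · intro p hp
      simp only [Finset.mem_filter, Finset.HasAntidiagonal.mem_antidiagonal] at hp
      simp only [Finset.HasAntidiagonal.mem_antidiagonal]
      apply phi_inj
      rw [phi_add, phi_psi _ hp.2.1, phi_psi _ hp.2.2, hp.1, phi_psi e he]
    · intro q hq
      simp only [Finset.HasAntidiagonal.mem_antidiagonal] at hq
      simp only [Finset.mem_filter, Finset.HasAntidiagonal.mem_antidiagonal]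
      refine ⟨?_, Sfn_le_phi4 _, Sfn_le_phi4 _⟩
      rw [← phi_add, hq, phi_psi e he]
    · intro p hp
      simp only [Finset.mem_filter] at hp
      simp [phi_psi _ hp.2.1, phi_psi _ hp.2.2]
    · intro q _
      simp [psi_phi]
    · intro p _
      simp [psi_phi]
  · rw [if_neg he]
    symm
    refine Finset.sum_eq_zero fun p hp => ?_
    simp only [Finset.HasAntidiagonal.mem_antidiagonal] at hp
    by_cases h1 : Sfn p.1 ≤ p.1 4
    · by_cases h2 : Sfn p.2 ≤ p.2 4
      · exfalso
        apply he
        have : e = phi (psi p.1 + psi p.2) := by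
          rw [phi_add, phi_psi _ h1, phi_psi _ h2, hp]
        rw [this]
        exact Sfn_le_phi4 _
      · have : coeff p.2 (T g) = 0 := by rw [coeff_T, if_neg h2]
        rw [this, mul_zero]
    · have : coeff p.1 (T f) = 0 := by rw [coeff_T, if_neg h1]
      rw [this, zero_mul]

lemma T_constantCoeff (f : MvPowerSeries (Fin 6) K) :
    constantCoeff (T f) = constantCoeff f := by
  rw [← coeff_zero_eq_constantCoeff_apply, ← coeff_zero_eq_constantCoeff_apply, coeff_T]
  have h0 : Sfn (0 : Fin 6 →₀ ℕ) ≤ (0 : Fin 6 →₀ ℕ) 4 := by simp [Sfn]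
  have hpsi : psi (0 : Fin 6 →₀ ℕ) = 0 := by
    conv_lhs => rw [← phi_zero]
    rw [psi_phi]
  rw [if_pos h0, hpsi]

lemma T_pow (f : MvPowerSeries (Fin 6) K) (n : ℕ) : T (f ^ n) = T f ^ n := by
  induction n with
  | zero => simpa using T_one
  | succ n ih => rw [pow_succ, T_mul, ih, pow_succ]


def sfam : Fin 6 → MvPowerSeries (Fin 6) K :=
  ![X 4 * X 0, X 4 * X 1, X 4 * X 2, X 4 * X 3, X 4, X 4 * X 5]

lemma prod_sfam_pow (d : Fin 6 →₀ ℕ) :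
    (∏ i, (sfam (K := K)) i ^ d i) = monomial (phi d) 1 := by
  have hXX : ∀ (i : Fin 6) (n : ℕ), ((X 4 * X i : MvPowerSeries (Fin 6) K)) ^ n =
      monomial (Finsupp.single 4 n + Finsupp.single i n) 1 := by
    intro i n
    rw [mul_pow, X_pow_eq, X_pow_eq, monomial_mul_monomial, one_mul]
  rw [Fin.prod_univ_six]
  have e0 : (sfam (K := K)) 0 = X 4 * X 0 := rfl
  have e1 : (sfam (K := K)) 1 = X 4 * X 1 := rfl
  have e2 : (sfam (K := K)) 2 = X 4 * X 2 := rfl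
  have e3 : (sfam (K := K)) 3 = X 4 * X 3 := rfl
  have e4 : (sfam (K := K)) 4 = X 4 := rfl
  have e5 : (sfam (K := K)) 5 = X 4 * X 5 := rfl
  rw [e0, e1, e2, e3, e4, e5, hXX 0, hXX 1, hXX 2, hXX 3, hXX 5, X_pow_eq]
  simp only [monomial_mul_monomial, one_mul]
  refine congrArg (fun m => (monomial m) (1 : K)) ?_
  ext i
  fin_cases i <;>
    simp [phi, Sfn, Finsupp.single_apply] <;> ring

lemma le_weight (e : Fin 6 →₀ ℕ) (i : Fin 6) : e i ≤ e.sum fun _ k => k := by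
  rw [Finsupp.sum_fintype _ _ (fun _ => rfl)]
  exact Finset.single_le_sum (fun j _ => Nat.zero_le (e j)) (Finset.mem_univ i)

lemma psSubst_eq_T (f : MvPowerSeries (Fin 6) K) :
    psSubst (sfam (K := K)) f = T f := by
  ext e
  show (∑ d ∈ Finset.Iic (Finsupp.equivFunOnFinite.symm fun _ : Fin 6 => e.sum fun _ k => k),
      coeff d f * coeff e (∏ i, sfam (K := K) i ^ d i)) = coeff e (T f)
  rw [coeff_T]
  by_cases he : Sfn e ≤ e 4
  · rw [if_pos he]
    have key : ∀ d : Fin 6 →₀ ℕ,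
        coeff d f * coeff e (∏ i, sfam (K := K) i ^ d i) =
        if d = psi e then coeff d f else 0 := by
      intro d
      rw [prod_sfam_pow, coeff_monomial]
      by_cases hd : d = psi e
      · rw [if_pos hd, if_pos (by rw [hd, phi_psi e he]), mul_one]
      · rw [if_neg hd, if_neg (fun h => hd (by rw [← psi_phi d, ← h, ← phi_psi e he, psi_phi])), mul_zero]
    simp only [key]
    rw [Finset.sum_ite_eq' _ (psi e) (fun d => coeff d f)]
    rw [if_pos]
    rw [Finset.mem_Iic]
    intro i
    simp only [Finsupp.coe_equivFunOnFinite_symm]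
    by_cases hi : i = 4
    · subst hi
      calc psi e 4 = e 4 - Sfn e := psi_apply4 e
        _ ≤ e 4 := Nat.sub_le _ _
        _ ≤ _ := le_weight e 4
    · rw [psi_apply_ne e i hi]
      exact le_weight e i
  · rw [if_neg he]
    refine Finset.sum_eq_zero fun d _ => ?_
    rw [prod_sfam_pow, coeff_monomial,
      if_neg (fun h => he (by rw [h]; exact Sfn_le_phi4 d)), mul_zero]

lemma T_X_ne (i : Fin 6) (h : i ≠ 4) : T (X i : MvPowerSeries (Fin 6) K) = X 4 * X i := by
  rw [show (X i : MvPowerSeries (Fin 6) K) = monomial (Finsupp.single i 1) 1 from rfl,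
    T_monomial,
    show (X 4 : MvPowerSeries (Fin 6) K) * monomial (Finsupp.single i 1) 1 =
      monomial (Finsupp.single 4 1 + Finsupp.single i 1) 1 by
      rw [X, monomial_mul_monomial, one_mul]]
  refine congrArg (fun m => (monomial m) (1 : K)) ?_
  have hS : Sfn (Finsupp.single i 1) = 1 := by
    fin_cases i
    · simp [Sfn, Finsupp.single_apply]
    · simp [Sfn, Finsupp.single_apply]
    · simp [Sfn, Finsupp.single_apply]
    · simp [Sfn, Finsupp.single_apply]
    · exact absurd rfl h
    · simp [Sfn, Finsupp.single_apply]
  ext j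
  by_cases hj : j = 4
  · subst hj
    simp [phi, hS, Finsupp.single_apply, Ne.symm h]
  · simp [phi, Finsupp.single_apply, Ne.symm hj]

lemma T_X4 : T (X 4 : MvPowerSeries (Fin 6) K) = X 4 := by
  rw [show (X 4 : MvPowerSeries (Fin 6) K) = monomial (Finsupp.single 4 1) 1 from rfl,
    T_monomial]
  refine congrArg (fun m => (monomial m) (1 : K)) ?_
  ext j
  simp [phi, Sfn, Finsupp.single_apply]

end C2Aux

open C2Aux in
/-- Characteristic-2 example, blowups (4): `k`-fold iteration of the
monomial `v`-chart point blowup `σ_v` (`z ↦ vz`, `x ↦ vx`, `y ↦ vy`, `u ↦ vu`, `v ↦ v`,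
`w ↦ vw`).  Variables: `z = X 0`, `x = X 1`, `y = X 2`, `u = X 3`, `v = X 4`, `w = X 5`.
In particular, for even `d` and `k = d/2` the first term in the parenthesis is
`w^d y⁴ u v^d · B_k`. -/
theorem char2_fourth_blowups (K : Type*) [Field K]
    (d a r s : ℕ) (hsd : d ≤ 8 * s)
    (B A : MvPowerSeries (Fin 6) K) (hBz : avoids 0 B) (hAz : avoids 0 A)
    (hB : constantCoeff B ≠ 0) (hA : constantCoeff A ≠ 0)
    (f : MvPowerSeries (Fin 6) K)
    (hf : f = X 0 ^ 8 + X 1 ^ (8 * a + 4) * X 3 ^ (8 * r + 7) * X 5 ^ (8 * s - d) *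
        (X 5 ^ d * X 2 ^ 4 * X 3 * B + X 1 ^ (d + 3) * A))
    (σᵥ : MvPowerSeries (Fin 6) K → MvPowerSeries (Fin 6) K)
    (hσ : σᵥ = psSubst ![X 4 * X 0, X 4 * X 1, X 4 * X 2, X 4 * X 3, X 4, X 4 * X 5]) :
    (∀ k : ℕ,
      σᵥ^[k] f = X 4 ^ (8 * k) * (X 0 ^ 8 +
        X 1 ^ (8 * a + 4) * X 3 ^ (8 * r + 7) *
          X 4 ^ (k * (8 * (a + r + s) + 6)) * X 5 ^ (8 * s - d) *
          (X 5 ^ d * X 2 ^ 4 * X 3 * X 4 ^ (2 * k) * σᵥ^[k] B +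
            X 1 ^ (d + 3) * σᵥ^[k] A)) ∧
      constantCoeff (σᵥ^[k] B) ≠ 0 ∧
      constantCoeff (σᵥ^[k] A) ≠ 0) ∧
    (Even d → 2 * (d / 2) = d) := by
  have hσT : σᵥ = T := by
    rw [hσ]; funext g; exact psSubst_eq_T g
  rw [hσT]
  refine ⟨?_, fun hd => by obtain ⟨c, hc⟩ := hd; omega⟩
  intro k
  induction k with
  | zero =>
    refine ⟨?_, by simpa using hB, by simpa using hA⟩
    simp only [Function.iterate_zero, id_eq, Nat.mul_zero, Nat.zero_mul, pow_zero, one_mul,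
      mul_one]
    exact hf
  | succ k ih =>
    obtain ⟨ih1, ihB, ihA⟩ := ih
    refine ⟨?_, by rw [Function.iterate_succ_apply', T_constantCoeff]; exact ihB,
      by rw [Function.iterate_succ_apply', T_constantCoeff]; exact ihA⟩
    simp only [Function.iterate_succ_apply']
    rw [ih1]
    simp only [T_mul, T_add, T_pow, T_X4, T_X_ne 0 (by decide), T_X_ne 1 (by decide),
      T_X_ne 2 (by decide), T_X_ne 3 (by decide), T_X_ne 5 (by decide)]
    obtain ⟨t, ht⟩ : ∃ t, 8 * s - d = t := ⟨_, rfl⟩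
    have hts : d + t = 8 * s := by omega
    rw [ht]
    have h2 : 8 * (a + r + s) + 6 = 8 * a + 8 * r + d + t + 6 := by omega
    rw [h2]
    ring
end
end

section
/- Let K be a field, R = K[[z,x,y,u,v,w]], d ≥ 0 an even integer, M ≥ 0 an integer, and a, r, s non-negative integers with 8s ≥ d. Let B, A ∈ K[[x,y,u,v,w]] be units. Set f = z⁸ + x^{8a+4} u^{8r+7} v^{M} w^{8s−d}·( w^d y⁴ u v^{d}·B + x^{d+3}·A ). Let σ : R → R be the substitution z↦wz, x↦wx, y↦w(y+1), u↦wu, v↦w(v+1), w↦w (the w-chart point blowup with translations y↦y+1, v↦v+1). Then there exist units B₅, A₅ ∈ K[[x,y,u,v,w]] such that σ(f) = w⁸·( z⁸ + x^{8a+4} u^{8r+7} w^{8(a+r+s)+6+M}·( w^{d+2} u·B₅ + x^{d+3}·A₅ ) ). Moreover, if M = (8(a+r+s)+6)·d/2 then 8(a+r+s)+6+M ≡ −(d+2) (mod 8), i.e. the w-exponent has the form 8s′−(d+2) for an integer s′ ≥ 0. -/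
noncomputable section

open MvPowerSeries

namespace PsAux
variable {K : Type*} [Field K] {n : ℕ}
def deg (e : Fin n →₀ ℕ) : ℕ := e.sum fun _ k => k
lemma deg_eq_sum (e : Fin n →₀ ℕ) : deg e = ∑ i, e i :=
  Finsupp.sum_fintype _ _ (fun _ => rfl)
lemma le_deg (e : Fin n →₀ ℕ) (i : Fin n) : e i ≤ deg e := by
  rw [deg_eq_sum]
  exact Finset.single_le_sum (fun _ _ => Nat.zero_le _) (Finset.mem_univ i)
lemma deg_add (a b : Fin n →₀ ℕ) : deg (a + b) = deg a + deg b := by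
  simp [deg_eq_sum, Finsupp.add_apply, Finset.sum_add_distrib]
lemma deg_eq_zero {e : Fin n →₀ ℕ} (h : deg e = 0) : e = 0 := by
  rw [deg_eq_sum] at h
  ext i
  exact (Finset.sum_eq_zero_iff.mp h) i (Finset.mem_univ i)
def Dbox (e : Fin n →₀ ℕ) : Fin n →₀ ℕ := Finsupp.equivFunOnFinite.symm fun _ => deg e
@[simp] lemma Dbox_apply (e : Fin n →₀ ℕ) (i : Fin n) : Dbox e i = deg e := rfl
lemma mem_Iic_Dbox {d e : Fin n →₀ ℕ} :
    d ∈ Finset.Iic (Dbox e) ↔ ∀ i, d i ≤ deg e := by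
  simp [Finset.mem_Iic, Finsupp.le_def]
def P (s : Fin n → MvPowerSeries (Fin n) K) (dd : Fin n →₀ ℕ) : MvPowerSeries (Fin n) K :=
  ∏ i, s i ^ dd i
lemma P_add (s : Fin n → MvPowerSeries (Fin n) K) (d1 d2 : Fin n →₀ ℕ) :
    P s (d1 + d2) = P s d1 * P s d2 := by
  simp [P, Finsupp.add_apply, pow_add, Finset.prod_mul_distrib]
def OrdGe (m : ℕ) (f : MvPowerSeries (Fin n) K) : Prop :=
  ∀ e : Fin n →₀ ℕ, deg e < m → coeff e f = 0
lemma OrdGe.mul {m k : ℕ} {f g : MvPowerSeries (Fin n) K}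
    (hf : OrdGe m f) (hg : OrdGe k g) : OrdGe (m + k) (f * g) := by
  classical
  intro e he
  rw [coeff_mul]
  apply Finset.sum_eq_zero
  intro p hp
  rw [Finset.HasAntidiagonal.mem_antidiagonal] at hp
  have hd : deg p.1 + deg p.2 = deg e := by rw [← deg_add, hp]
  by_cases h1 : deg p.1 < m
  · rw [hf _ h1, zero_mul]
  · have h2 : deg p.2 < k := by omega
    rw [hg _ h2, mul_zero]
lemma ordGe_one {f : MvPowerSeries (Fin n) K}
    (hf : constantCoeff f = 0) : OrdGe 1 f := by
  intro e he
  have : e = 0 := deg_eq_zero (by omega)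
  rw [this, coeff_zero_eq_constantCoeff_apply, hf]
lemma OrdGe.pow {f : MvPowerSeries (Fin n) K} (hf : OrdGe 1 f) (k : ℕ) : OrdGe k (f ^ k) := by
  induction k with
  | zero => intro e he; omega
  | succ k ih =>
      have := ih.mul hf
      rw [← pow_succ] at this
      exact this
lemma ordGe_P (s : Fin n → MvPowerSeries (Fin n) K)
    (hs : ∀ i, constantCoeff (s i) = 0) (dd : Fin n →₀ ℕ) :
    OrdGe (∑ i, dd i) (P s dd) := by
  classical
  rw [P]
  induction (Finset.univ : Finset (Fin n)) using Finset.cons_induction with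
  | empty => simpa using (show OrdGe 0 (1 : MvPowerSeries (Fin n) K) from
      fun e (he : deg e < 0) => absurd he (by omega))
  | cons i t hit ih =>
      rw [Finset.sum_cons, Finset.prod_cons]
      exact ((ordGe_one (hs i)).pow (dd i)).mul ih
lemma coeff_P_eq_zero {s : Fin n → MvPowerSeries (Fin n) K}
    (hs : ∀ i, constantCoeff (s i) = 0) {e dd : Fin n →₀ ℕ}
    (h : deg e < ∑ i, dd i) : coeff e (P s dd) = 0 :=
  ordGe_P s hs dd e h
lemma coeff_P_eq_zero' {s : Fin n → MvPowerSeries (Fin n) K}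
    (hs : ∀ i, constantCoeff (s i) = 0) {e dd : Fin n →₀ ℕ} {i : Fin n}
    (h : deg e < dd i) : coeff e (P s dd) = 0 :=
  coeff_P_eq_zero hs (lt_of_lt_of_le h
    (Finset.single_le_sum (fun _ _ => Nat.zero_le _) (Finset.mem_univ i)))
lemma coeff_psSubst_eq (s : Fin n → MvPowerSeries (Fin n) K)
    (hs : ∀ i, constantCoeff (s i) = 0)
    (f : MvPowerSeries (Fin n) K) (e : Fin n →₀ ℕ) (T : Finset (Fin n →₀ ℕ))
    (hT : Finset.Iic (Dbox e) ⊆ T) :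
    coeff e (psSubst s f) = ∑ dd ∈ T, coeff dd f * coeff e (P s dd) := by
  rw [coeff_apply]
  show ∑ dd ∈ Finset.Iic (Dbox e), coeff dd f * coeff e (P s dd) = _
  apply Finset.sum_subset hT
  intro dd _ hdd
  rw [mem_Iic_Dbox] at hdd
  push_neg at hdd
  obtain ⟨i, hi⟩ := hdd
  rw [coeff_P_eq_zero' hs hi, mul_zero]

variable (s : Fin n → MvPowerSeries (Fin n) K)
  (hs : ∀ i, constantCoeff (s i) = 0)

include hs

lemma psSubst_one : psSubst s (1 : MvPowerSeries (Fin n) K) = 1 := by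
  classical
  apply MvPowerSeries.ext
  intro e
  rw [coeff_psSubst_eq s hs 1 e _ (subset_refl _)]
  have h0 : (0 : Fin n →₀ ℕ) ∈ Finset.Iic (Dbox e) := Finset.mem_Iic.2 zero_le
  rw [Finset.sum_eq_single_of_mem 0 h0]
  · simp [P, coeff_one]
  · intro b _ hb
    rw [coeff_one, if_neg hb, zero_mul]

lemma psSubst_add (f g : MvPowerSeries (Fin n) K) :
    psSubst s (f + g) = psSubst s f + psSubst s g := by
  apply MvPowerSeries.ext
  intro e
  rw [map_add, coeff_psSubst_eq s hs _ e _ (subset_refl _),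
    coeff_psSubst_eq s hs f e _ (subset_refl _), coeff_psSubst_eq s hs g e _ (subset_refl _),
    ← Finset.sum_add_distrib]
  apply Finset.sum_congr rfl
  intro dd _
  rw [map_add, add_mul]

lemma psSubst_mul (f g : MvPowerSeries (Fin n) K) :
    psSubst s (f * g) = psSubst s f * psSubst s g := by
  classical
  apply MvPowerSeries.ext
  intro e
  have hRHS : coeff e (psSubst s f * psSubst s g) =
      ∑ y ∈ Finset.HasAntidiagonal.antidiagonal e, ∑ d1 ∈ Finset.Iic (Dbox e), ∑ d2 ∈ Finset.Iic (Dbox e),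
        coeff d1 f * coeff d2 g * (coeff y.1 (P s d1) * coeff y.2 (P s d2)) := by
    rw [coeff_mul]
    apply Finset.sum_congr rfl
    intro y hy
    rw [Finset.HasAntidiagonal.mem_antidiagonal] at hy
    have h1 : deg y.1 ≤ deg e := by rw [← hy, deg_add]; omega
    have h2 : deg y.2 ≤ deg e := by rw [← hy, deg_add]; omega
    have hs1 : Finset.Iic (Dbox y.1) ⊆ Finset.Iic (Dbox e) := by
      intro dd hdd; rw [mem_Iic_Dbox] at hdd ⊢; intro i; exact le_trans (hdd i) h1
    have hs2 : Finset.Iic (Dbox y.2) ⊆ Finset.Iic (Dbox e) := by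
      intro dd hdd; rw [mem_Iic_Dbox] at hdd ⊢; intro i; exact le_trans (hdd i) h2
    rw [coeff_psSubst_eq s hs f y.1 _ hs1, coeff_psSubst_eq s hs g y.2 _ hs2,
      Finset.sum_mul_sum]
    apply Finset.sum_congr rfl; intro d1 _
    apply Finset.sum_congr rfl; intro d2 _
    ring
  rw [hRHS]
  rw [coeff_psSubst_eq s hs _ e _ (subset_refl _)]
  have hLHS : ∑ dd ∈ Finset.Iic (Dbox e), coeff dd (f * g) * coeff e (P s dd) =
      ∑ dd ∈ Finset.Iic (Dbox e), ∑ x ∈ Finset.HasAntidiagonal.antidiagonal dd, ∑ y ∈ Finset.HasAntidiagonal.antidiagonal e,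
        coeff x.1 f * coeff x.2 g * (coeff y.1 (P s x.1) * coeff y.2 (P s x.2)) := by
    apply Finset.sum_congr rfl
    intro dd _
    rw [coeff_mul, Finset.sum_mul]
    apply Finset.sum_congr rfl
    intro x hx
    rw [Finset.HasAntidiagonal.mem_antidiagonal] at hx
    have hPx : P s dd = P s x.1 * P s x.2 := by rw [← hx, P_add]
    rw [hPx, coeff_mul, Finset.mul_sum]
  rw [hLHS]
  have hre : ∑ dd ∈ Finset.Iic (Dbox e), ∑ x ∈ Finset.HasAntidiagonal.antidiagonal dd,
        ∑ y ∈ Finset.HasAntidiagonal.antidiagonal e,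
        coeff x.1 f * coeff x.2 g * (coeff y.1 (P s x.1) * coeff y.2 (P s x.2)) =
      ∑ x ∈ (Finset.Iic (Dbox e) ×ˢ Finset.Iic (Dbox e)).filter
          (fun x => x.1 + x.2 ∈ Finset.Iic (Dbox e)),
        ∑ y ∈ Finset.HasAntidiagonal.antidiagonal e,
        coeff x.1 f * coeff x.2 g * (coeff y.1 (P s x.1) * coeff y.2 (P s x.2)) := by
    rw [Finset.sum_sigma']
    refine Finset.sum_nbij' (fun p => p.2) (fun x => ⟨x.1 + x.2, x⟩) ?_ ?_ ?_ ?_ ?_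
    · intro p hp
      simp only [Finset.mem_sigma, Finset.HasAntidiagonal.mem_antidiagonal] at hp
      obtain ⟨hp1, hp2⟩ := hp
      rw [mem_Iic_Dbox] at hp1
      rw [Finset.mem_filter, Finset.mem_product]
      refine ⟨⟨?_, ?_⟩, ?_⟩
      · rw [mem_Iic_Dbox]; intro i
        have := hp1 i; rw [← hp2] at this; simp only [Finsupp.add_apply] at this; omega
      · rw [mem_Iic_Dbox]; intro i
        have := hp1 i; rw [← hp2] at this; simp only [Finsupp.add_apply] at this; omega
      · rw [hp2, mem_Iic_Dbox]; exact hp1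
    · intro x hx
      rw [Finset.mem_filter] at hx
      simp only [Finset.mem_sigma, Finset.HasAntidiagonal.mem_antidiagonal]
      exact ⟨hx.2, by simp⟩
    · intro p hp
      simp only [Finset.mem_sigma, Finset.HasAntidiagonal.mem_antidiagonal] at hp
      exact Sigma.ext hp.2 (by simp)
    · intro x _; rfl
    · intro p _; rfl
  rw [hre]
  have hext : ∑ x ∈ (Finset.Iic (Dbox e) ×ˢ Finset.Iic (Dbox e)).filter
          (fun x => x.1 + x.2 ∈ Finset.Iic (Dbox e)),
        ∑ y ∈ Finset.HasAntidiagonal.antidiagonal e,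
        coeff x.1 f * coeff x.2 g * (coeff y.1 (P s x.1) * coeff y.2 (P s x.2)) =
      ∑ x ∈ Finset.Iic (Dbox e) ×ˢ Finset.Iic (Dbox e),
        ∑ y ∈ Finset.HasAntidiagonal.antidiagonal e,
        coeff x.1 f * coeff x.2 g * (coeff y.1 (P s x.1) * coeff y.2 (P s x.2)) := by
    apply Finset.sum_subset (Finset.filter_subset _ _)
    intro x hx hxn
    rw [Finset.mem_filter, not_and] at hxn
    have hnot : x.1 + x.2 ∉ Finset.Iic (Dbox e) := hxn hx
    rw [mem_Iic_Dbox] at hnot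
    push_neg at hnot
    obtain ⟨i, hi⟩ := hnot
    simp only [Finsupp.add_apply] at hi
    apply Finset.sum_eq_zero
    intro y hy
    rw [Finset.HasAntidiagonal.mem_antidiagonal] at hy
    have hdeg : deg y.1 + deg y.2 = deg e := by rw [← deg_add, hy]
    by_cases h1 : deg y.1 < x.1 i
    · rw [coeff_P_eq_zero' hs h1]; ring
    · have h2 : deg y.2 < x.2 i := by omega
      rw [coeff_P_eq_zero' hs h2]; ring
  rw [hext, Finset.sum_product]
  calc ∑ d1 ∈ Finset.Iic (Dbox e), ∑ d2 ∈ Finset.Iic (Dbox e), ∑ y ∈ Finset.HasAntidiagonal.antidiagonal e,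
        coeff d1 f * coeff d2 g * (coeff y.1 (P s d1) * coeff y.2 (P s d2))
      = ∑ d1 ∈ Finset.Iic (Dbox e), ∑ y ∈ Finset.HasAntidiagonal.antidiagonal e, ∑ d2 ∈ Finset.Iic (Dbox e),
        coeff d1 f * coeff d2 g * (coeff y.1 (P s d1) * coeff y.2 (P s d2)) :=
        Finset.sum_congr rfl fun d1 _ => Finset.sum_comm
    _ = ∑ y ∈ Finset.HasAntidiagonal.antidiagonal e, ∑ d1 ∈ Finset.Iic (Dbox e), ∑ d2 ∈ Finset.Iic (Dbox e),
        coeff d1 f * coeff d2 g * (coeff y.1 (P s d1) * coeff y.2 (P s d2)) :=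
        Finset.sum_comm

lemma psSubst_X (i : Fin n) : psSubst s (X i) = s i := by
  classical
  apply MvPowerSeries.ext
  intro e
  rw [coeff_psSubst_eq s hs _ e _ (subset_refl _)]
  have hsum : ∑ dd ∈ Finset.Iic (Dbox e), coeff dd (X i : MvPowerSeries (Fin n) K) *
      coeff e (P s dd) =
      if Finsupp.single i 1 ∈ Finset.Iic (Dbox e) then coeff e (P s (Finsupp.single i 1))
      else 0 := by
    rw [← Finset.sum_ite_eq' (Finset.Iic (Dbox e)) (Finsupp.single i 1)
      (fun dd => coeff e (P s dd))]
    apply Finset.sum_congr rfl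
    intro dd _
    rw [coeff_X]
    split <;> simp_all
  rw [hsum]
  have hP : P s (Finsupp.single i 1) = s i := by
    rw [P, Finset.prod_eq_single i]
    · rw [Finsupp.single_eq_same, pow_one]
    · intro j _ hj
      rw [Finsupp.single_eq_of_ne hj, pow_zero]
    · intro h; exact absurd (Finset.mem_univ i) h
  split
  · rw [hP]
  · next h =>
      rw [mem_Iic_Dbox] at h
      push_neg at h
      obtain ⟨j, hj⟩ := h
      by_cases hij : j = i
      · subst hij
        rw [Finsupp.single_eq_same] at hj
        have he0 : e = 0 := deg_eq_zero (by omega)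
        rw [he0, coeff_zero_eq_constantCoeff_apply, hs _]
      · rw [Finsupp.single_eq_of_ne (fun h => hij h)] at hj
        omega



lemma psSubst_zero' : psSubst s (0 : MvPowerSeries (Fin n) K) = 0 := by
  apply MvPowerSeries.ext
  intro e
  rw [coeff_psSubst_eq s hs _ e _ (subset_refl _)]
  simp

def psSubstHom : MvPowerSeries (Fin n) K →+* MvPowerSeries (Fin n) K where
  toFun := psSubst s
  map_one' := psSubst_one s hs
  map_mul' := psSubst_mul s hs
  map_zero' := psSubst_zero' s hs
  map_add' := psSubst_add s hs

lemma psSubstHom_apply (f : MvPowerSeries (Fin n) K) : psSubstHom s hs f = psSubst s f := rfl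

lemma constantCoeff_psSubst (f : MvPowerSeries (Fin n) K) :
    constantCoeff (psSubst s f) = constantCoeff f := by
  rw [← coeff_zero_eq_constantCoeff_apply, ← coeff_zero_eq_constantCoeff_apply,
    coeff_psSubst_eq s hs f 0 _ (subset_refl _)]
  have hIic : Finset.Iic (Dbox (0 : Fin n →₀ ℕ)) = {0} := by
    ext dd
    rw [mem_Iic_Dbox, Finset.mem_singleton]
    constructor
    · intro h
      ext i
      have := h i
      simp [deg] at this
      exact this
    · intro h i
      subst h
      simp
  rw [hIic, Finset.sum_singleton]
  have : P s (0 : Fin n →₀ ℕ) = 1 := by simp [P]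
  rw [this]
  classical
  rw [coeff_one, if_pos rfl, mul_one]

omit hs

lemma avoids_add {i₀ : Fin n} {f g : MvPowerSeries (Fin n) K}
    (h1 : avoids i₀ f) (h2 : avoids i₀ g) : avoids i₀ (f + g) := fun d hd => by
  rw [map_add, h1 d hd, h2 d hd, add_zero]

lemma avoids_one {i₀ : Fin n} : avoids i₀ (1 : MvPowerSeries (Fin n) K) := by
  classical
  intro d hd
  rw [coeff_one, if_neg]
  intro h
  exact hd (by rw [h]; rfl)

lemma avoids_mul {i₀ : Fin n} {f g : MvPowerSeries (Fin n) K}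
    (h1 : avoids i₀ f) (h2 : avoids i₀ g) : avoids i₀ (f * g) := by
  classical
  intro d hd
  rw [coeff_mul]
  apply Finset.sum_eq_zero
  intro p hp
  rw [Finset.HasAntidiagonal.mem_antidiagonal] at hp
  have hadd : p.1 i₀ + p.2 i₀ = d i₀ := by rw [← hp]; rfl
  by_cases hc : p.1 i₀ = 0
  · have : p.2 i₀ ≠ 0 := by omega
    rw [h2 p.2 this, mul_zero]
  · rw [h1 p.1 hc, zero_mul]

lemma avoids_pow {i₀ : Fin n} {f : MvPowerSeries (Fin n) K}
    (h1 : avoids i₀ f) (k : ℕ) : avoids i₀ (f ^ k) := by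
  induction k with
  | zero => rw [pow_zero]; exact avoids_one
  | succ k ih => rw [pow_succ]; exact avoids_mul ih h1

lemma avoids_X {i₀ j : Fin n} (h : j ≠ i₀) : avoids i₀ (X j : MvPowerSeries (Fin n) K) := by
  classical
  intro d hd
  rw [coeff_X, if_neg]
  intro hdj
  apply hd
  rw [hdj]
  exact Finsupp.single_eq_of_ne h.symm

include hs

lemma avoids_psSubst {i₀ : Fin n} {f : MvPowerSeries (Fin n) K}
    (hf : avoids i₀ f) (hsA : ∀ j, j ≠ i₀ → avoids i₀ (s j)) :
    avoids i₀ (psSubst s f) := by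
  intro e he
  rw [coeff_psSubst_eq s hs f e _ (subset_refl _)]
  apply Finset.sum_eq_zero
  intro dd _
  by_cases hc : coeff dd f = 0
  · rw [hc, zero_mul]
  · have hdd0 : dd i₀ = 0 := by
      by_contra h
      exact hc (hf dd h)
    have hP : avoids i₀ (P s dd) := by
      rw [P]
      apply Finset.prod_induction _ (avoids i₀) (fun _ _ => avoids_mul) avoids_one
      intro j _
      by_cases hj : j = i₀
      · subst hj
        rw [hdd0, pow_zero]
        exact avoids_one
      · exact avoids_pow (hsA j hj) _
    rw [hP e he, mul_zero]

end PsAux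

/-- The key ring identity, over any commutative ring. -/
lemma blowup_ring_identity {R : Type*} [CommRing R] (z x y u v w B' A' : R)
    (a r M c d : ℕ) :
    (w*z)^8 + (w*x)^(8*a+4) * (w*u)^(8*r+7) * (w*v)^M * w^c *
      (w^d * (w*y)^4 * (w*u) * (w*v)^d * B' + (w*x)^(d+3) * A') =
    w^8 * (z^8 + x^(8*a+4) * u^(8*r+7) * w^(8*a+8*r+(d+c)+6+M) *
      (w^(d+2) * u * (y^4 * v^(M+d) * B') + x^(d+3) * (v^M * A'))) := by
  ring


@[simp] lemma cons_val_five {α : Type*} {m : ℕ} (x : α) (u : Fin (m+5) → α) :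
    Matrix.vecCons x u 5 =
      Matrix.vecHead (Matrix.vecTail (Matrix.vecTail (Matrix.vecTail (Matrix.vecTail u)))) :=
  rfl

/-- Characteristic-2 example, blowup (5): the `w`-chart point blowup
with translations `y ↦ y+1`, `v ↦ v+1` (`z ↦ wz`, `x ↦ wx`, `y ↦ w(y+1)`, `u ↦ wu`,
`v ↦ w(v+1)`, `w ↦ w`).  Variables: `z = X 0`, `x = X 1`, `y = X 2`, `u = X 3`,
`v = X 4`, `w = X 5`.  Moreover, if `M = (8(a+r+s)+6)·d/2` then the resulting
`w`-exponent `8(a+r+s)+6+M` is `≡ −(d+2) (mod 8)`, i.e. of the form `8s′ − (d+2)` with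
`s′ ≥ 0`. -/
theorem char2_fifth_blowup (K : Type*) [Field K]
    (d M a r s : ℕ) (hdE : Even d) (hsd : d ≤ 8 * s)
    (B A : MvPowerSeries (Fin 6) K) (hBz : avoids 0 B) (hAz : avoids 0 A)
    (hB : constantCoeff B ≠ 0) (hA : constantCoeff A ≠ 0)
    (f : MvPowerSeries (Fin 6) K)
    (hf : f = X 0 ^ 8 + X 1 ^ (8 * a + 4) * X 3 ^ (8 * r + 7) * X 4 ^ M *
        X 5 ^ (8 * s - d) *
        (X 5 ^ d * X 2 ^ 4 * X 3 * X 4 ^ d * B + X 1 ^ (d + 3) * A))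
    (σ : MvPowerSeries (Fin 6) K → MvPowerSeries (Fin 6) K)
    (hσ : σ = psSubst ![X 5 * X 0, X 5 * X 1, X 5 * (X 2 + 1), X 5 * X 3,
        X 5 * (X 4 + 1), X 5]) :
    (∃ B₅ A₅ : MvPowerSeries (Fin 6) K,
      avoids 0 B₅ ∧ avoids 0 A₅ ∧
      constantCoeff B₅ ≠ 0 ∧ constantCoeff A₅ ≠ 0 ∧
      σ f = X 5 ^ 8 * (X 0 ^ 8 +
        X 1 ^ (8 * a + 4) * X 3 ^ (8 * r + 7) * X 5 ^ (8 * (a + r + s) + 6 + M) *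
          (X 5 ^ (d + 2) * X 3 * B₅ + X 1 ^ (d + 3) * A₅))) ∧
    (M = (8 * (a + r + s) + 6) * d / 2 →
      ∃ s' : ℕ, d + 2 ≤ 8 * s' ∧ 8 * (a + r + s) + 6 + M = 8 * s' - (d + 2)) := by
  subst hσ hf
  refine ⟨?_, ?_⟩
  · set sv : Fin 6 → MvPowerSeries (Fin 6) K :=
      ![X 5 * X 0, X 5 * X 1, X 5 * (X 2 + 1), X 5 * X 3, X 5 * (X 4 + 1), X 5] with hsv
    have hs0 : ∀ i, constantCoeff (sv i) = 0 := by
      intro i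
      fin_cases i <;>
        simp only [hsv, Matrix.cons_val_zero, Matrix.cons_val_one, Matrix.cons_val_two,
          Matrix.cons_val_three, Matrix.cons_val_four, cons_val_five, Matrix.head_cons,
          Matrix.tail_cons] <;>
        simp [map_mul, constantCoeff_X]
    have hX := PsAux.psSubst_X sv hs0
    have hav : ∀ j : Fin 6, j ≠ 0 → avoids 0 (sv j) := by
      intro j hj
      fin_cases j <;>
        simp only [hsv, Matrix.cons_val_zero, Matrix.cons_val_one, Matrix.cons_val_two,
          Matrix.cons_val_three, Matrix.cons_val_four, cons_val_five, Matrix.head_cons,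
          Matrix.tail_cons]
      · simp at hj
      · exact PsAux.avoids_mul (PsAux.avoids_X (by decide)) (PsAux.avoids_X (by decide))
      · exact PsAux.avoids_mul (PsAux.avoids_X (by decide))
          (PsAux.avoids_add (PsAux.avoids_X (by decide)) PsAux.avoids_one)
      · exact PsAux.avoids_mul (PsAux.avoids_X (by decide)) (PsAux.avoids_X (by decide))
      · exact PsAux.avoids_mul (PsAux.avoids_X (by decide))
          (PsAux.avoids_add (PsAux.avoids_X (by decide)) PsAux.avoids_one)
      · exact PsAux.avoids_X (by decide)
    refine ⟨(X 2 + 1)^4 * (X 4 + 1)^(M+d) * psSubst sv B,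
           (X 4 + 1)^M * psSubst sv A, ?_, ?_, ?_, ?_, ?_⟩
    · exact PsAux.avoids_mul (PsAux.avoids_mul
        (PsAux.avoids_pow (PsAux.avoids_add (PsAux.avoids_X (by decide)) PsAux.avoids_one) 4)
        (PsAux.avoids_pow (PsAux.avoids_add (PsAux.avoids_X (by decide)) PsAux.avoids_one)
          (M+d)))
        (PsAux.avoids_psSubst sv hs0 hBz hav)
    · exact PsAux.avoids_mul
        (PsAux.avoids_pow (PsAux.avoids_add (PsAux.avoids_X (by decide)) PsAux.avoids_one) M)
        (PsAux.avoids_psSubst sv hs0 hAz hav)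
    · simpa [map_mul, map_pow, map_add, constantCoeff_X,
        PsAux.constantCoeff_psSubst sv hs0] using hB
    · simpa [map_mul, map_pow, map_add, constantCoeff_X,
        PsAux.constantCoeff_psSubst sv hs0] using hA
    · have e0 : psSubst sv (X 0 : MvPowerSeries (Fin 6) K) = X 5 * X 0 := by
        rw [hX 0]
        simp only [hsv, Matrix.cons_val_zero, Matrix.cons_val_one, Matrix.cons_val_two,
          Matrix.cons_val_three, Matrix.cons_val_four, cons_val_five, Matrix.head_cons,
          Matrix.tail_cons]
      have e1 : psSubst sv (X 1 : MvPowerSeries (Fin 6) K) = X 5 * X 1 := by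
        rw [hX 1]
        simp only [hsv, Matrix.cons_val_zero, Matrix.cons_val_one, Matrix.cons_val_two,
          Matrix.cons_val_three, Matrix.cons_val_four, cons_val_five, Matrix.head_cons,
          Matrix.tail_cons]
      have e2 : psSubst sv (X 2 : MvPowerSeries (Fin 6) K) = X 5 * (X 2 + 1) := by
        rw [hX 2]
        simp only [hsv, Matrix.cons_val_zero, Matrix.cons_val_one, Matrix.cons_val_two,
          Matrix.cons_val_three, Matrix.cons_val_four, cons_val_five, Matrix.head_cons,
          Matrix.tail_cons]
      have e3 : psSubst sv (X 3 : MvPowerSeries (Fin 6) K) = X 5 * X 3 := by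
        rw [hX 3]
        simp only [hsv, Matrix.cons_val_zero, Matrix.cons_val_one, Matrix.cons_val_two,
          Matrix.cons_val_three, Matrix.cons_val_four, cons_val_five, Matrix.head_cons,
          Matrix.tail_cons]
      have e4 : psSubst sv (X 4 : MvPowerSeries (Fin 6) K) = X 5 * (X 4 + 1) := by
        rw [hX 4]
        simp only [hsv, Matrix.cons_val_zero, Matrix.cons_val_one, Matrix.cons_val_two,
          Matrix.cons_val_three, Matrix.cons_val_four, cons_val_five, Matrix.head_cons,
          Matrix.tail_cons]
      have e5 : psSubst sv (X 5 : MvPowerSeries (Fin 6) K) = X 5 := by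
        rw [hX 5]
        simp only [hsv, Matrix.cons_val_zero, Matrix.cons_val_one, Matrix.cons_val_two,
          Matrix.cons_val_three, Matrix.cons_val_four, cons_val_five, Matrix.head_cons,
          Matrix.tail_cons]
      have key : psSubst sv (X 0 ^ 8 + X 1 ^ (8 * a + 4) * X 3 ^ (8 * r + 7) * X 4 ^ M *
          X 5 ^ (8 * s - d) *
          (X 5 ^ d * X 2 ^ 4 * X 3 * X 4 ^ d * B + X 1 ^ (d + 3) * A)) =
          (X 5 * X 0)^8 + (X 5 * X 1)^(8*a+4) * (X 5 * X 3)^(8*r+7) * (X 5 * (X 4+1))^M *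
            (X 5 : MvPowerSeries (Fin 6) K)^(8*s-d) *
          ((X 5 : MvPowerSeries (Fin 6) K)^d * (X 5 * (X 2+1))^4 * (X 5 * X 3) *
            (X 5 * (X 4+1))^d * psSubst sv B + (X 5 * X 1)^(d+3) * psSubst sv A) := by
        show PsAux.psSubstHom sv hs0 _ = _
        simp only [map_add, map_mul, map_pow, PsAux.psSubstHom_apply]
        rw [e0, e1, e2, e3, e4, e5]
      rw [key, show 8*(a+r+s)+6+M = 8*a+8*r+(d+(8*s-d))+6+M from by omega]
      exact blowup_ring_identity (X 0) (X 1) (X 2 + 1) (X 3) (X 4 + 1) (X 5)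
        (psSubst sv B) (psSubst sv A) a r M (8*s-d) d
  · intro hM
    obtain ⟨e2, he2⟩ := hdE
    have hM' : M = (8*(a+r+s)+6)*e2 := by
      rw [hM, he2]
      rw [show (8*(a+r+s)+6)*(e2+e2) = ((8*(a+r+s)+6)*e2)*2 from by ring]
      exact Nat.mul_div_cancel _ (by norm_num)
    set s' : ℕ := (a+r+s+1) + (a+r+s+1)*e2 with hs'
    have hA8 : 8*s' = (8*(a+r+s)+6+M) + (d+2) := by
      rw [hs', hM', he2]; ring
    exact ⟨s', by omega, by omega⟩
end
end

section
/- Let p be an odd prime, K an algebraically closed field of characteristic p, and R = K[[z,x,y,v,w]]. Let d ≥ 1, let a, r ≥ 0 and b, s ≥ 1 be integers with b·p³ ≥ (p³−1)/2 and s·p³ ≥ d, and set q = (p+1)(d+p²−1)/2. Let λ ∈ K∖{0}, Q ∈ K[[x,y,v,w]] arbitrary and A ∈ K[[x,y,v,w]] a unit. Set f = z^{p³} + x^{ap³+(p³−p²)/2} y^{bp³−(p³−1)/2} v^{rp³} w^{sp³−d}·( y^{(p²−1)/2} w^{d}·(λ + v^{q}·Q) + x^{d+(p²+1)/2} v^{q}·A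 ). Let σ : R → R be the substitution z↦xz, x↦x, y↦x(y+1), v↦x(v+1), w↦xw. Then there exist g ∈ K[[x,y,v,w]], units B, A′ ∈ K[[x,y,v,w]] and a series Q′ ∈ K[[x,y,v,w]] such that σ(f) = x^{p³}·( (z−g)^{p³} + x^{(a+b+r+s−1)p³} w^{sp³−d}·( y^{p²} w^{d}·B + x^{q} w^{d}·Q′ + x^{q+1}·A′ ) ). (One may take g = λ^{1/p³}·x^{a+b+r+s−1} w^{s} (y+1)^{b−1} (v+1)^{r}.) -/
noncomputable section

open MvPowerSeries

namespace Blow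
variable {K : Type*} [Field K] {n : ℕ}

def tdeg (e : Fin n →₀ ℕ) : ℕ := e.sum fun _ k => k

lemma apply_le_tdeg (e : Fin n →₀ ℕ) (i : Fin n) : e i ≤ tdeg e := by
  by_cases h : i ∈ e.support
  · exact Finset.single_le_sum (fun j _ => Nat.zero_le _) h
  · simp [Finsupp.notMem_support_iff.mp h]

lemma tdeg_add (u v : Fin n →₀ ℕ) : tdeg (u + v) = tdeg u + tdeg v :=
  Finsupp.sum_add_index' (fun _ => rfl) (fun _ _ _ => rfl)

lemma tdeg_eq_zero {e : Fin n →₀ ℕ} (h : tdeg e = 0) : e = 0 := by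
  ext i
  simp only [Finsupp.coe_zero, Pi.zero_apply]
  have := apply_le_tdeg e i; omega

def bnd (e : Fin n →₀ ℕ) : Fin n →₀ ℕ :=
  Finsupp.equivFunOnFinite.symm fun _ : Fin n => tdeg e

lemma mem_Iic_bnd {e d : Fin n →₀ ℕ} (h : tdeg d ≤ tdeg e) : d ∈ Finset.Iic (bnd e) := by
  rw [Finset.mem_Iic]
  intro i
  calc d i ≤ tdeg d := apply_le_tdeg d i
    _ ≤ tdeg e := h
    _ = bnd e i := by simp [bnd]

lemma tdeg_lt_of_not_mem {e d : Fin n →₀ ℕ} (h : d ∉ Finset.Iic (bnd e)) :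
    tdeg e < tdeg d := by
  by_contra hc
  exact h (mem_Iic_bnd (by omega))

def ordGe (m : ℕ) (f : MvPowerSeries (Fin n) K) : Prop :=
  ∀ e : Fin n →₀ ℕ, tdeg e < m → MvPowerSeries.coeff e f = 0

lemma ordGe_mul {m k : ℕ} {f g : MvPowerSeries (Fin n) K} (hf : ordGe m f) (hg : ordGe k g) :
    ordGe (m + k) (f * g) := by
  intro e he
  rw [MvPowerSeries.coeff_mul]
  apply Finset.sum_eq_zero
  rintro ⟨u, v⟩ hp
  rw [Finset.HasAntidiagonal.mem_antidiagonal] at hp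
  have hs : tdeg u + tdeg v < m + k := by rw [← tdeg_add, hp]; exact he
  by_cases h1 : tdeg u < m
  · rw [hf u h1, zero_mul]
  · rw [hg v (by omega), mul_zero]

lemma ordGe_of_cc_zero {f : MvPowerSeries (Fin n) K}
    (h : MvPowerSeries.constantCoeff f = 0) : ordGe 1 f := by
  intro e he
  have : e = 0 := tdeg_eq_zero (by omega)
  subst this
  exact h

lemma ordGe_zero (f : MvPowerSeries (Fin n) K) : ordGe 0 f := fun _ h => absurd h (by omega)

lemma ordGe_pow {m : ℕ} {f : MvPowerSeries (Fin n) K} (hf : ordGe m f) (k : ℕ) :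
    ordGe (k * m) (f ^ k) := by
  induction k with
  | zero => simpa using ordGe_zero 1
  | succ k ih =>
      have := ordGe_mul ih hf
      rw [pow_succ]
      have hk : (k + 1) * m = k * m + m := by ring
      rw [hk]; exact this

lemma ordGe_prod {ι : Type*} (t : Finset ι) (F : ι → MvPowerSeries (Fin n) K) (m : ι → ℕ)
    (h : ∀ i ∈ t, ordGe (m i) (F i)) : ordGe (∑ i ∈ t, m i) (∏ i ∈ t, F i) := by
  classical
  induction t using Finset.induction_on with
  | empty => simpa using ordGe_zero 1
  | insert a t' hnotmem ih =>
      rw [Finset.sum_insert hnotmem, Finset.prod_insert hnotmem]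
      exact ordGe_mul (h a (Finset.mem_insert_self a t'))
        (ih fun i hi => h i (Finset.mem_insert_of_mem hi))

variable (s : Fin n → MvPowerSeries (Fin n) K)

lemma W_zero (hs0 : ∀ i, MvPowerSeries.constantCoeff (s i) = 0)
    {e d : Fin n →₀ ℕ} (h : tdeg e < tdeg d) :
    MvPowerSeries.coeff e (∏ i, s i ^ d i) = 0 := by
  have hp : ordGe (∑ i, d i * 1) (∏ i, s i ^ d i) :=
    ordGe_prod Finset.univ _ _ (fun i _ => ordGe_pow (ordGe_of_cc_zero (hs0 i)) (d i))
  apply hp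
  have : tdeg d = ∑ i, d i * 1 := by
    simp only [mul_one]
    exact Finsupp.sum_fintype d (fun _ k => k) (fun _ => rfl)
  omega

lemma psSubst_coeff (hs0 : ∀ i, MvPowerSeries.constantCoeff (s i) = 0)
    (f : MvPowerSeries (Fin n) K) (e : Fin n →₀ ℕ) (S : Finset (Fin n →₀ ℕ))
    (hS : ∀ d, tdeg d ≤ tdeg e → d ∈ S) :
    MvPowerSeries.coeff e (psSubst s f) =
      ∑ d ∈ S, MvPowerSeries.coeff d f * MvPowerSeries.coeff e (∏ i, s i ^ d i) := by
  classical
  have hL : MvPowerSeries.coeff e (psSubst s f) =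
      ∑ d ∈ Finset.Iic (bnd e), MvPowerSeries.coeff d f *
        MvPowerSeries.coeff e (∏ i, s i ^ d i) := rfl
  set F : (Fin n →₀ ℕ) → K := fun d =>
    MvPowerSeries.coeff d f * MvPowerSeries.coeff e (∏ i, s i ^ d i) with hF
  have h1 : ∑ d ∈ Finset.Iic (bnd e), F d = ∑ d ∈ Finset.Iic (bnd e) ∩ S, F d := by
    refine (Finset.sum_subset Finset.inter_subset_left ?_).symm
    intro d hd hdn
    have hdS : d ∉ S := fun hc => hdn (Finset.mem_inter.2 ⟨hd, hc⟩)
    have hlt : tdeg e < tdeg d := by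
      by_contra hc
      exact hdS (hS d (by omega))
    show MvPowerSeries.coeff d f * MvPowerSeries.coeff e (∏ i, s i ^ d i) = 0
    rw [W_zero s hs0 hlt, mul_zero]
  have h2 : ∑ d ∈ Finset.Iic (bnd e) ∩ S, F d = ∑ d ∈ S, F d := by
    refine Finset.sum_subset Finset.inter_subset_right ?_
    intro d hdS hdn
    have hd : d ∉ Finset.Iic (bnd e) := fun hc => hdn (Finset.mem_inter.2 ⟨hc, hdS⟩)
    show MvPowerSeries.coeff d f * MvPowerSeries.coeff e (∏ i, s i ^ d i) = 0
    rw [W_zero s hs0 (tdeg_lt_of_not_mem hd), mul_zero]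
  rw [hL, h1, h2]


variable {K : Type*} [Field K] {n : ℕ} (s : Fin n → MvPowerSeries (Fin n) K)

lemma psSubst_add (f g : MvPowerSeries (Fin n) K) :
    psSubst s (f + g) = psSubst s f + psSubst s g := by
  ext e
  show (psSubst s (f+g)) e = (psSubst s f) e + (psSubst s g) e
  unfold psSubst
  rw [← Finset.sum_add_distrib]
  apply Finset.sum_congr rfl
  intro d _
  rw [map_add, add_mul]

lemma psSubst_C (c : K) :
    psSubst s (MvPowerSeries.C c) = MvPowerSeries.C c := by
  ext e
  show (psSubst s (MvPowerSeries.C c)) e = MvPowerSeries.coeff e _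
  unfold psSubst
  rw [Finset.sum_eq_single 0]
  · rw [MvPowerSeries.coeff_zero_C]
    have h1 : ∏ i, s i ^ (0 : Fin n →₀ ℕ) i = 1 := by simp
    rw [h1, MvPowerSeries.coeff_one, MvPowerSeries.coeff_C]
    split_ifs <;> simp
  · intro d _ hd
    rw [MvPowerSeries.coeff_C, if_neg (by simpa using hd), zero_mul]
  · intro h
    exact absurd (Finset.mem_Iic.2 (by intro i; simp)) h

lemma psSubst_one : psSubst s (1 : MvPowerSeries (Fin n) K) = 1 := by
  have h1 : (1 : MvPowerSeries (Fin n) K) = MvPowerSeries.C 1 := by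
    rw [map_one]
  rw [h1, psSubst_C]

lemma psSubst_X (hs0 : ∀ i, MvPowerSeries.constantCoeff (s i) = 0) (i : Fin n) :
    psSubst s (MvPowerSeries.X i) = s i := by
  classical
  ext e
  by_cases h0 : tdeg e = 0
  · have he : e = 0 := tdeg_eq_zero h0
    subst he
    rw [psSubst_coeff s hs0 _ _ {0} (fun d hd => by
      simp only [Finset.mem_singleton]
      exact tdeg_eq_zero (by omega))]
    rw [Finset.sum_singleton, MvPowerSeries.coeff_zero_X, zero_mul,
      MvPowerSeries.coeff_zero_eq_constantCoeff, hs0 i]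
  · rw [psSubst_coeff s hs0 _ _ (Finset.Iic (bnd e)) (fun d hd => mem_Iic_bnd hd)]
    rw [Finset.sum_eq_single (Finsupp.single i 1)]
    · rw [MvPowerSeries.coeff_X, if_pos rfl]
      have h1 : ∏ j, s j ^ (Finsupp.single i 1) j = s i := by
        rw [Finset.prod_eq_single i]
        · simp
        · intro j _ hj
          rw [Finsupp.single_apply, if_neg (fun hc => hj hc.symm), pow_zero]
        · simp
      rw [h1, one_mul]
    · intro d _ hd
      rw [MvPowerSeries.coeff_X, if_neg hd, zero_mul]
    · intro h
      exfalso
      apply h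
      apply mem_Iic_bnd
      have h2 : tdeg (Finsupp.single i 1) = 1 := by simp [tdeg]
      omega

lemma bridge (e : Fin n →₀ ℕ) (F : (Fin n →₀ ℕ) × (Fin n →₀ ℕ) → K)
    (ht : ∀ p : (Fin n →₀ ℕ) × (Fin n →₀ ℕ), tdeg e < tdeg (p.1 + p.2) → F p = 0) :
    ∑ d ∈ Finset.Iic (bnd e), ∑ p ∈ Finset.HasAntidiagonal.antidiagonal d, F p
      = ∑ u ∈ Finset.Iic (bnd e), ∑ v ∈ Finset.Iic (bnd e), F (u, v) := by
  classical
  have hle : ∀ p : (Fin n →₀ ℕ) × (Fin n →₀ ℕ), p.1 ≤ p.1 + p.2 ∧ p.2 ≤ p.1 + p.2 := by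
    intro p
    constructor <;> (rw [Finsupp.le_def]; intro j; simp)
  rw [Finset.sum_sigma' (Finset.Iic (bnd e)) (fun d => Finset.HasAntidiagonal.antidiagonal d) (fun _ p => F p)]
  rw [← Finset.sum_product' (f := fun u v => F (u, v))]
  rw [← Finset.sum_subset
    (Finset.filter_subset (fun p => p.1 + p.2 ∈ Finset.Iic (bnd e))
      (Finset.Iic (bnd e) ×ˢ Finset.Iic (bnd e)))
    (fun p _ hp => by
      apply ht
      apply tdeg_lt_of_not_mem
      intro hc
      rcases Finset.mem_product.1 (by assumption) with ⟨h1, h2⟩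
      exact hp (Finset.mem_filter.2 ⟨by assumption, hc⟩))]
  apply Finset.sum_nbij' (i := fun x => x.2) (j := fun p => ⟨p.1 + p.2, p⟩)
  · rintro ⟨d, p⟩ hx
    rcases Finset.mem_sigma.1 hx with ⟨hd, hp⟩
    have hpd : p.1 + p.2 = d := Finset.HasAntidiagonal.mem_antidiagonal.1 hp
    rw [Finset.mem_Iic] at hd
    apply Finset.mem_filter.2
    refine ⟨Finset.mem_product.2 ⟨?_, ?_⟩, ?_⟩
    · exact Finset.mem_Iic.2 (le_trans (hpd ▸ (hle p).1) hd)
    · exact Finset.mem_Iic.2 (le_trans (hpd ▸ (hle p).2) hd)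
    · rw [hpd]; exact Finset.mem_Iic.2 hd
  · intro p hp
    rcases Finset.mem_filter.1 hp with ⟨hprod, hsum⟩
    rcases Finset.mem_product.1 hprod with ⟨h1, h2⟩
    exact Finset.mem_sigma.2 ⟨hsum, Finset.HasAntidiagonal.mem_antidiagonal.2 rfl⟩
  · rintro ⟨d, p⟩ hx
    rcases Finset.mem_sigma.1 hx with ⟨hd, hp⟩
    have hpd : p.1 + p.2 = d := Finset.HasAntidiagonal.mem_antidiagonal.1 hp
    simp [hpd]
  · intro p hp; rfl
  · intro x hx; rfl

lemma psSubst_mul (hs0 : ∀ i, MvPowerSeries.constantCoeff (s i) = 0)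
    (f g : MvPowerSeries (Fin n) K) :
    psSubst s (f * g) = psSubst s f * psSubst s g := by
  classical
  ext e
  have hL0 : (MvPowerSeries.coeff e) (psSubst s (f*g)) =
      ∑ d ∈ Finset.Iic (bnd e), MvPowerSeries.coeff d (f*g) *
        MvPowerSeries.coeff e (∏ i, s i ^ d i) := rfl
  have hL : (MvPowerSeries.coeff e) (psSubst s (f*g)) =
      ∑ d ∈ Finset.Iic (bnd e), ∑ p ∈ Finset.HasAntidiagonal.antidiagonal d,
        (MvPowerSeries.coeff p.1 f * MvPowerSeries.coeff p.2 g) *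
          MvPowerSeries.coeff e (∏ i, s i ^ (p.1 + p.2) i) := by
    rw [hL0]
    refine Finset.sum_congr rfl fun d _ => ?_
    rw [MvPowerSeries.coeff_mul, Finset.sum_mul]
    refine Finset.sum_congr rfl fun p hp => ?_
    rw [Finset.HasAntidiagonal.mem_antidiagonal.1 hp]
  have hmid : ∀ u v : Fin n →₀ ℕ,
      MvPowerSeries.coeff e (∏ i, s i ^ (u + v) i) =
        ∑ p ∈ Finset.HasAntidiagonal.antidiagonal e,
          MvPowerSeries.coeff p.1 (∏ i, s i ^ u i) *
            MvPowerSeries.coeff p.2 (∏ i, s i ^ v i) := by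
    intro u v
    have hprod : (∏ i, s i ^ (u + v) i) = (∏ i, s i ^ u i) * (∏ i, s i ^ v i) := by
      rw [← Finset.prod_mul_distrib]
      refine Finset.prod_congr rfl fun i _ => ?_
      rw [Finsupp.add_apply, pow_add]
    rw [hprod, MvPowerSeries.coeff_mul]
  have hR : (MvPowerSeries.coeff e) (psSubst s f * psSubst s g) =
      ∑ u ∈ Finset.Iic (bnd e), ∑ v ∈ Finset.Iic (bnd e),
        (MvPowerSeries.coeff u f * MvPowerSeries.coeff v g) *
          ∑ p ∈ Finset.HasAntidiagonal.antidiagonal e,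
            MvPowerSeries.coeff p.1 (∏ i, s i ^ u i) *
              MvPowerSeries.coeff p.2 (∏ i, s i ^ v i) := by
    rw [MvPowerSeries.coeff_mul]
    have hRf : ∀ p ∈ Finset.HasAntidiagonal.antidiagonal e,
        MvPowerSeries.coeff p.1 (psSubst s f) * MvPowerSeries.coeff p.2 (psSubst s g) =
        ∑ u ∈ Finset.Iic (bnd e), ∑ v ∈ Finset.Iic (bnd e),
          (MvPowerSeries.coeff u f * MvPowerSeries.coeff v g) *
            (MvPowerSeries.coeff p.1 (∏ i, s i ^ u i) *
             MvPowerSeries.coeff p.2 (∏ i, s i ^ v i)) := by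
      rintro ⟨e1, e2⟩ hp
      rw [Finset.HasAntidiagonal.mem_antidiagonal] at hp
      dsimp only at hp ⊢
      have he1 : tdeg e1 ≤ tdeg e := by rw [← hp, tdeg_add]; omega
      have he2 : tdeg e2 ≤ tdeg e := by rw [← hp, tdeg_add]; omega
      rw [psSubst_coeff s hs0 f e1 (Finset.Iic (bnd e)) (fun d hd => mem_Iic_bnd (by omega)),
          psSubst_coeff s hs0 g e2 (Finset.Iic (bnd e)) (fun d hd => mem_Iic_bnd (by omega)),
          Finset.sum_mul_sum]
      refine Finset.sum_congr rfl fun u _ => Finset.sum_congr rfl fun v _ => by ring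
    rw [Finset.sum_congr rfl hRf, Finset.sum_comm]
    refine Finset.sum_congr rfl fun u _ => ?_
    rw [Finset.sum_comm]
    refine Finset.sum_congr rfl fun v _ => ?_
    rw [← Finset.mul_sum]
  rw [hL, hR]
  rw [bridge e (fun p => (MvPowerSeries.coeff p.1 f * MvPowerSeries.coeff p.2 g) *
      MvPowerSeries.coeff e (∏ i, s i ^ (p.1 + p.2) i))
    (fun p hp => by rw [W_zero s hs0 hp, mul_zero])]
  exact Finset.sum_congr rfl fun u _ => Finset.sum_congr rfl fun v _ => by rw [hmid]

lemma psSubst_pow (hs0 : ∀ i, MvPowerSeries.constantCoeff (s i) = 0)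
    (f : MvPowerSeries (Fin n) K) (k : ℕ) :
    psSubst s (f ^ k) = psSubst s f ^ k := by
  induction k with
  | zero => simpa using psSubst_one s
  | succ k ih => rw [pow_succ, pow_succ, psSubst_mul s hs0, ih]


lemma avoids_one (i₀ : Fin n) : avoids i₀ (1 : MvPowerSeries (Fin n) K) := by
  intro d hd
  rw [MvPowerSeries.coeff_one, if_neg]
  intro hc; subst hc; simp at hd

lemma avoids_C (i₀ : Fin n) (c : K) : avoids i₀ (MvPowerSeries.C c) := by
  intro d hd
  rw [MvPowerSeries.coeff_C, if_neg]
  intro hc; subst hc; simp at hd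

lemma avoids_X {i₀ j : Fin n} (h : j ≠ i₀) : avoids i₀ (MvPowerSeries.X j : MvPowerSeries (Fin n) K) := by
  intro d hd
  rw [MvPowerSeries.coeff_X, if_neg]
  intro hc; subst hc
  rw [Finsupp.single_apply, if_neg h] at hd
  exact hd rfl

lemma avoids_add {i₀ : Fin n} {f g : MvPowerSeries (Fin n) K}
    (hf : avoids i₀ f) (hg : avoids i₀ g) : avoids i₀ (f + g) := by
  intro d hd
  rw [map_add, hf d hd, hg d hd, add_zero]

lemma avoids_mul {i₀ : Fin n} {f g : MvPowerSeries (Fin n) K}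
    (hf : avoids i₀ f) (hg : avoids i₀ g) : avoids i₀ (f * g) := by
  intro d hd
  rw [MvPowerSeries.coeff_mul]
  apply Finset.sum_eq_zero
  rintro ⟨u, v⟩ hp
  have hpd : u + v = d := Finset.HasAntidiagonal.mem_antidiagonal.1 hp
  have : u i₀ + v i₀ = d i₀ := by rw [← hpd]; simp
  by_cases h1 : u i₀ = 0
  · rw [hg v (by omega), mul_zero]
  · rw [hf u h1, zero_mul]

lemma avoids_pow {i₀ : Fin n} {f : MvPowerSeries (Fin n) K} (hf : avoids i₀ f) (k : ℕ) :
    avoids i₀ (f ^ k) := by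
  induction k with
  | zero => simpa using avoids_one i₀
  | succ k ih => rw [pow_succ]; exact avoids_mul ih hf

lemma avoids_prod {i₀ : Fin n} {ι : Type*} (t : Finset ι) (F : ι → MvPowerSeries (Fin n) K)
    (h : ∀ i ∈ t, avoids i₀ (F i)) : avoids i₀ (∏ i ∈ t, F i) := by
  exact Finset.prod_induction F (avoids i₀) (fun a b ha hb => avoids_mul ha hb)
    (avoids_one i₀) h

lemma avoids_sum {i₀ : Fin n} {ι : Type*} (t : Finset ι) (F : ι → MvPowerSeries (Fin n) K)
    (h : ∀ i ∈ t, avoids i₀ (F i)) : avoids i₀ (∑ i ∈ t, F i) := by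
  intro d hd
  rw [map_sum]
  exact Finset.sum_eq_zero fun i hi => h i hi d hd

lemma avoids_psSubst {i₀ : Fin n} {f : MvPowerSeries (Fin n) K}
    (hs0 : ∀ i, MvPowerSeries.constantCoeff (s i) = 0)
    (hf : avoids i₀ f) (hsA : ∀ i, i ≠ i₀ → avoids i₀ (s i)) :
    avoids i₀ (psSubst s f) := by
  intro e he
  show (∑ d ∈ Finset.Iic (bnd e), MvPowerSeries.coeff d f *
    MvPowerSeries.coeff e (∏ i, s i ^ d i)) = 0
  apply Finset.sum_eq_zero
  intro d _
  by_cases hcd : MvPowerSeries.coeff d f = 0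
  · rw [hcd, zero_mul]
  · have hd0 : d i₀ = 0 := by
      by_contra hc
      exact hcd (hf d hc)
    have hav : avoids i₀ (∏ i, s i ^ d i) := by
      apply avoids_prod
      intro i _
      by_cases hi : i = i₀
      · subst hi; rw [hd0, pow_zero]; exact avoids_one _
      · exact avoids_pow (hsA i hi) (d i)
    rw [hav e he, mul_zero]

lemma constantCoeff_psSubst (hs0 : ∀ i, MvPowerSeries.constantCoeff (s i) = 0)
    (f : MvPowerSeries (Fin n) K) :
    MvPowerSeries.constantCoeff (psSubst s f) =
      MvPowerSeries.constantCoeff f := by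
  rw [← MvPowerSeries.coeff_zero_eq_constantCoeff]
  rw [psSubst_coeff s hs0 f 0 {0} (fun d hd => by
    simp only [Finset.mem_singleton]
    refine tdeg_eq_zero ?_
    have h0 : tdeg (0 : Fin n →₀ ℕ) = 0 := by simp [tdeg]
    omega)]
  rw [Finset.sum_singleton]
  have h1 : ∏ i, s i ^ (0 : Fin n →₀ ℕ) i = 1 := by simp
  rw [h1, MvPowerSeries.coeff_one, if_pos rfl, mul_one]


lemma one_add_pow {R : Type*} [CommRing R] (t : R) (m : ℕ) :
    (t + 1) ^ m = 1 + t * ∑ k ∈ Finset.range m, (m.choose (k + 1) : R) * t ^ k := by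
  rw [add_pow, Finset.sum_range_succ']
  simp only [one_pow, pow_zero, Nat.choose_zero_right, Nat.cast_one, one_mul, mul_one]
  rw [Finset.mul_sum, add_comm]
  congr 1
  refine Finset.sum_congr rfl fun k _ => ?_
  ring

end Blow

open Blow in
set_option maxHeartbeats 2000000 in
/-- Odd-characteristic example, blowup (1): the `x`-chart point blowup
with translations `y ↦ y+1`, `v ↦ v+1` (`z ↦ xz`, `x ↦ x`, `y ↦ x(y+1)`, `v ↦ x(v+1)`,
`w ↦ xw`), followed by cleaning `z ↦ z − g`.  Variables: `z = X 0`, `x = X 1`, `y = X 2`,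
`v = X 3`, `w = X 4` in `R = K[[z,x,y,v,w]]`. -/
theorem oddp_first_blowup (p : ℕ) (hp : p.Prime) (hpodd : Odd p)
    (K : Type*) [Field K] [IsAlgClosed K] [CharP K p]
    (d a b r s : ℕ) (hd1 : 1 ≤ d) (hb1 : 1 ≤ b) (hs1 : 1 ≤ s)
    (hb : (p ^ 3 - 1) / 2 ≤ b * p ^ 3) (hs : d ≤ s * p ^ 3)
    (q : ℕ) (hq : q = (p + 1) * (d + p ^ 2 - 1) / 2)
    (lam : K) (hlam : lam ≠ 0)
    (Q A : MvPowerSeries (Fin 5) K) (hQz : avoids 0 Q) (hAz : avoids 0 A)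
    (hA : constantCoeff A ≠ 0)
    (f : MvPowerSeries (Fin 5) K)
    (hf : f = X 0 ^ p ^ 3 +
        X 1 ^ (a * p ^ 3 + (p ^ 3 - p ^ 2) / 2) * X 2 ^ (b * p ^ 3 - (p ^ 3 - 1) / 2) *
          X 3 ^ (r * p ^ 3) * X 4 ^ (s * p ^ 3 - d) *
          (X 2 ^ ((p ^ 2 - 1) / 2) * X 4 ^ d * (C lam + X 3 ^ q * Q) +
            X 1 ^ (d + (p ^ 2 + 1) / 2) * X 3 ^ q * A))
    (σ : MvPowerSeries (Fin 5) K → MvPowerSeries (Fin 5) K)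
    (hσ : σ = psSubst ![X 1 * X 0, X 1, X 1 * (X 2 + 1), X 1 * (X 3 + 1), X 1 * X 4]) :
    ∃ g B A' Q' : MvPowerSeries (Fin 5) K,
      avoids 0 g ∧ avoids 0 B ∧ avoids 0 A' ∧ avoids 0 Q' ∧
      constantCoeff B ≠ 0 ∧ constantCoeff A' ≠ 0 ∧
      σ f = X 1 ^ p ^ 3 * ((X 0 - g) ^ p ^ 3 +
        X 1 ^ ((a + b + r + s - 1) * p ^ 3) * X 4 ^ (s * p ^ 3 - d) *
          (X 2 ^ p ^ 2 * X 4 ^ d * B + X 1 ^ q * X 4 ^ d * Q' +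
            X 1 ^ (q + 1) * A')) := by
  classical
  haveI : Fact p.Prime := ⟨hp⟩
  haveI hchar : CharP (MvPowerSeries (Fin 5) K) p := by
    refine charP_of_injective_ringHom (f := MvPowerSeries.C) ?_ p
    intro x y hxy
    simpa using congrArg (MvPowerSeries.constantCoeff) hxy
  obtain ⟨u, hu⟩ := hpodd
  obtain ⟨b', rfl⟩ : ∃ b', b = b' + 1 := ⟨b - 1, by omega⟩
  have h3 : p ^ 3 = 2 * (4*u^3 + 6*u^2 + 3*u) + 1 := by rw [hu]; ring
  have h2 : p ^ 2 = 2 * (2*u^2 + 2*u) + 1 := by rw [hu]; ring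
  set s5 : Fin 5 → MvPowerSeries (Fin 5) K :=
    ![X 1 * X 0, X 1, X 1 * (X 2 + 1), X 1 * (X 3 + 1), X 1 * X 4] with hs5
  have hs0 : ∀ i, MvPowerSeries.constantCoeff (s5 i) = 0 := by
    intro i
    fin_cases i <;>
      simp [hs5, MvPowerSeries.constantCoeff_X]
  -- check σ f expansion
  have hσf : σ f = (X 1 * X 0) ^ p ^ 3 +
      X 1 ^ (a * p ^ 3 + (p ^ 3 - p ^ 2) / 2) *
        (X 1 * (X 2 + 1)) ^ ((b' + 1) * p ^ 3 - (p ^ 3 - 1) / 2) *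
        (X 1 * (X 3 + 1)) ^ (r * p ^ 3) * (X 1 * X 4) ^ (s * p ^ 3 - d) *
        ((X 1 * (X 2 + 1)) ^ ((p ^ 2 - 1) / 2) * (X 1 * X 4) ^ d *
          (C lam + (X 1 * (X 3 + 1)) ^ q * psSubst s5 Q) +
          X 1 ^ (d + (p ^ 2 + 1) / 2) * (X 1 * (X 3 + 1)) ^ q * psSubst s5 A) := by
    rw [hσ, hf]
    simp only [psSubst_add s5, psSubst_mul s5 hs0, psSubst_pow s5 hs0, psSubst_X s5 hs0,
      psSubst_C s5]
    simp only [hs5, Matrix.cons_val_zero, Matrix.cons_val_one, Matrix.head_cons,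
      Matrix.cons_val_two, Matrix.tail_cons, Matrix.cons_val_three, Matrix.cons_val_four]
  -- root of -lam
  obtain ⟨μ, hμ⟩ := IsAlgClosed.exists_pow_nat_eq (-lam) (n := p ^ 3) (Nat.pos_of_ne_zero (by have := hp.pos; positivity))
  -- opaque G
  obtain ⟨G, hG⟩ : ∃ G : MvPowerSeries (Fin 5) K,
      G = ∑ k ∈ Finset.range (u + 1),
        (((u + 1).choose (k + 1) : MvPowerSeries (Fin 5) K)) * (X 2 ^ p ^ 2) ^ k := ⟨_, rfl⟩
  have hfrob : (X 2 + 1 : MvPowerSeries (Fin 5) K) ^ (p ^ 2 * (u + 1)) =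
      1 + X 2 ^ p ^ 2 * G := by
    rw [pow_mul, add_pow_char_pow (p := p), one_pow, one_add_pow, hG]
  -- basic avoids facts
  have av1 : avoids (0 : Fin 5) (X 1 : MvPowerSeries (Fin 5) K) := avoids_X (by decide)
  have av2 : avoids (0 : Fin 5) (X 2 : MvPowerSeries (Fin 5) K) := avoids_X (by decide)
  have av3 : avoids (0 : Fin 5) (X 3 : MvPowerSeries (Fin 5) K) := avoids_X (by decide)
  have av4 : avoids (0 : Fin 5) (X 4 : MvPowerSeries (Fin 5) K) := avoids_X (by decide)
  have avy : avoids (0 : Fin 5) (X 2 + 1 : MvPowerSeries (Fin 5) K) :=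
    avoids_add av2 (avoids_one 0)
  have avv : avoids (0 : Fin 5) (X 3 + 1 : MvPowerSeries (Fin 5) K) :=
    avoids_add av3 (avoids_one 0)
  have avG : avoids (0 : Fin 5) G := by
    rw [hG]
    refine avoids_sum _ _ fun k _ => avoids_mul ?_ (avoids_pow (avoids_pow av2 _) _)
    rw [← map_natCast (MvPowerSeries.C)]
    exact avoids_C _ _
  have hsav : ∀ i : Fin 5, i ≠ 0 → avoids 0 (s5 i) := by
    intro i hi
    fin_cases i
    · exact absurd rfl hi
    · simpa [hs5] using av1
    · simpa [hs5] using avoids_mul av1 avy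
    · simpa [hs5] using avoids_mul av1 avv
    · simpa [hs5] using avoids_mul av1 av4
  have avQ : avoids (0 : Fin 5) (psSubst s5 Q) := avoids_psSubst s5 hs0 hQz hsav
  have avA : avoids (0 : Fin 5) (psSubst s5 A) := avoids_psSubst s5 hs0 hAz hsav
  -- constant coefficients
  have hccy : MvPowerSeries.constantCoeff (X 2 + 1 : MvPowerSeries (Fin 5) K) = 1 := by
    simp [MvPowerSeries.constantCoeff_X]
  have hccv : MvPowerSeries.constantCoeff (X 3 + 1 : MvPowerSeries (Fin 5) K) = 1 := by
    simp [MvPowerSeries.constantCoeff_X]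
  have hccX2p : MvPowerSeries.constantCoeff ((X 2 : MvPowerSeries (Fin 5) K) ^ p ^ 2) = 0 := by
    rw [map_pow, MvPowerSeries.constantCoeff_X, zero_pow (by have := hp.pos; positivity)]
  have hccG : MvPowerSeries.constantCoeff G = ((u + 1 : ℕ) : K) := by
    rw [hG, map_sum]
    rw [Finset.sum_eq_single 0]
    · rw [pow_zero, mul_one, map_natCast, Nat.choose_one_right]
    · intro k _ hk
      rw [map_mul, map_pow, hccX2p, zero_pow hk, mul_zero]
    · intro h; exact absurd (Finset.mem_range.2 (by omega)) h
  have hune : ((u + 1 : ℕ) : K) ≠ 0 := by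
    intro h0
    have hpk : ((p : ℕ) : K) = 0 := CharP.cast_eq_zero K p
    have h1 : ((2 * (u + 1) : ℕ) : K) = ((p : ℕ) : K) + 1 := by
      rw [show 2 * (u + 1) = p + 1 from by omega]
      push_cast
      ring
    push_cast at h1 h0
    rw [h0, mul_zero, hpk, zero_add] at h1
    exact zero_ne_one h1
  have hccσA : MvPowerSeries.constantCoeff (psSubst s5 A) =
      MvPowerSeries.constantCoeff A := constantCoeff_psSubst s5 hs0 A
  refine ⟨MvPowerSeries.C μ * X 1 ^ (a + (b' + 1) + r + s - 1) * X 4 ^ s *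
      (X 2 + 1) ^ b' * (X 3 + 1) ^ r,
    MvPowerSeries.C lam * (X 2 + 1) ^ (b' * p ^ 3) * (X 3 + 1) ^ (r * p ^ 3) * G,
    (X 2 + 1) ^ (b' * p ^ 3 + (4*u^3 + 6*u^2 + 3*u + 1)) * (X 3 + 1) ^ (r * p ^ 3 + q) *
      psSubst s5 A,
    (X 2 + 1) ^ (b' * p ^ 3 + p ^ 2 * (u + 1)) * (X 3 + 1) ^ (r * p ^ 3 + q) * psSubst s5 Q,
    ?_, ?_, ?_, ?_, ?_, ?_, ?_⟩
  · exact avoids_mul (avoids_mul (avoids_mul (avoids_mul (avoids_C _ _) (avoids_pow av1 _))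
      (avoids_pow av4 _)) (avoids_pow avy _)) (avoids_pow avv _)
  · exact avoids_mul (avoids_mul (avoids_mul (avoids_C _ _) (avoids_pow avy _))
      (avoids_pow avv _)) avG
  · exact avoids_mul (avoids_mul (avoids_pow avy _) (avoids_pow avv _)) avA
  · exact avoids_mul (avoids_mul (avoids_pow avy _) (avoids_pow avv _)) avQ
  · have hcc : MvPowerSeries.constantCoeff
        (MvPowerSeries.C lam * (X 2 + 1) ^ (b' * p ^ 3) *
          (X 3 + 1) ^ (r * p ^ 3) * G) = lam * ((u + 1 : ℕ) : K) := by
      rw [map_mul, map_mul, map_mul, map_pow, map_pow, hccy, hccv, one_pow, one_pow,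
        MvPowerSeries.constantCoeff_C, hccG]
      ring
    rw [hcc]
    exact mul_ne_zero hlam hune
  · have hcc : MvPowerSeries.constantCoeff
        ((X 2 + 1) ^ (b' * p ^ 3 + (4*u^3 + 6*u^2 + 3*u + 1)) *
          (X 3 + 1) ^ (r * p ^ 3 + q) * psSubst s5 A) =
        MvPowerSeries.constantCoeff A := by
      rw [map_mul, map_mul, map_pow, map_pow, hccy, hccv, one_pow, one_pow, hccσA,
        one_mul, one_mul]
    rw [hcc]
    exact hA
  · have hgp : ((MvPowerSeries.C μ : MvPowerSeries (Fin 5) K) * X 1 ^ (a + (b' + 1) + r + s - 1) * X 4 ^ s *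
        (X 2 + 1) ^ b' * (X 3 + 1) ^ r) ^ p ^ 3 =
        -(MvPowerSeries.C lam) * X 1 ^ ((a + (b' + 1) + r + s - 1) * p ^ 3) *
          X 4 ^ (s * p ^ 3) * (X 2 + 1) ^ (b' * p ^ 3) * (X 3 + 1) ^ (r * p ^ 3) := by
      rw [mul_pow, mul_pow, mul_pow, mul_pow, ← map_pow, hμ, map_neg, ← pow_mul, ← pow_mul,
        ← pow_mul, ← pow_mul]
    rw [hσf, sub_pow_char_pow (p := p), hgp]
    set w1 := s * p ^ 3 - d with hw1
    clear_value w1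
    rw [show s * p ^ 3 = w1 + d from by omega]
    rw [show a + (b' + 1) + r + s - 1 = a + b' + r + s from by omega]
    rw [show (a + b' + r + s) * p ^ 3 = a * p ^ 3 + b' * p ^ 3 + r * p ^ 3 + (w1 + d) from by
          have hh : (a + b' + r + s) * p ^ 3 =
            a * p ^ 3 + b' * p ^ 3 + r * p ^ 3 + s * p ^ 3 := by ring
          omega]
    rw [show (b' + 1) * p ^ 3 - (p ^ 3 - 1) / 2 = b' * p ^ 3 + (4*u^3 + 6*u^2 + 3*u + 1) from by
          have hh : (b' + 1) * p ^ 3 = b' * p ^ 3 + p ^ 3 := by ring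
          omega]
    rw [show a * p ^ 3 + (p ^ 3 - p ^ 2) / 2 = a * p ^ 3 + (4*u^3 + 4*u^2 + u) from by omega]
    rw [show (p ^ 2 - 1) / 2 = 2*u^2 + 2*u from by omega]
    rw [show d + (p ^ 2 + 1) / 2 = d + (2*u^2 + 2*u + 1) from by omega]
    simp only [mul_pow]
    subst hu
    linear_combination (MvPowerSeries.C lam *
        X 1 ^ (a * (2*u+1) ^ 3 + b' * (2*u+1) ^ 3 + r * (2*u+1) ^ 3 + (w1 + d) + (2*u+1) ^ 3) *
        X 4 ^ (w1 + d) * (X 2 + 1) ^ (b' * (2*u+1) ^ 3) * (X 3 + 1) ^ (r * (2*u+1) ^ 3)) * hfrob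
end
end

section
/- Let p be an odd prime, K a field, R = K[[z,x,y,v,w]]. Let d ≥ 2, a ≥ 0, s ≥ 1 be integers with s·p³ ≥ d; set q = (p+1)(d+p²−1)/2 and d′ = d + p(p−1)/2. Let B, A ∈ K[[x,y,v,w]] be units and Q ∈ K[[x,y,v,w]] arbitrary. Set f = z^{p³} + x^{ap³} w^{sp³−d}·( y^{p²} w^{d}·B + x^{q} w^{d}·Q + x^{q+1}·A ). Let σ : R → R be the monomial x-chart substitution z↦xz, x↦x, y↦xy, v↦xv, w↦xw. Then there exist units B′, A′ ∈ K[[x,y,v,w]] such that the ((p−1)/2)-fold composite satisfies σ^{(p−1)/2}(f) = x^{p³(p−1)/2}·( z^{p³} + x^{(a+(s−1)(p−1)/2)p³+(p³−p²)/2} w^{sp³−d}·( y^{p²} w^{d}·B′ + x^{d′+(p²+1)/2}·A′ ) ), and ord( y^{p²} w^{d}·B′ + x^{d′+(p²+1)/2}·A′ ) = d′ + (p²+1)/2 = d + p² − (p−1)/2. -/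
noncomputable section

open MvPowerSeries

namespace OddpAux

variable {K : Type*} [Field K]

def sv (K : Type*) [Field K] : Fin 5 → MvPowerSeries (Fin 5) K :=
  ![X 1 * X 0, X 1, X 1 * X 2, X 1 * X 3, X 1 * X 4]

def wt (e : Fin 5 →₀ ℕ) : ℕ := e 0 + e 2 + e 3 + e 4

lemma sum_eq (e : Fin 5 →₀ ℕ) : (e.sum fun _ k => k) = e 1 + wt e := by
  rw [Finsupp.sum_fintype _ _ (fun _ => rfl), Fin.sum_univ_five, wt]; ring

lemma fin5_ext {m e : Fin 5 →₀ ℕ} (h0 : m 0 = e 0) (h1 : m 1 = e 1) (h2 : m 2 = e 2)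
    (h3 : m 3 = e 3) (h4 : m 4 = e 4) : m = e := by
  ext i; fin_cases i <;> assumption

lemma update1_apply (e : Fin 5 →₀ ℕ) (v : ℕ) (i : Fin 5) :
    (e.update 1 v) i = if i = 1 then v else e i := by
  rw [Finsupp.update]
  simp [Function.update_apply]

lemma wt_update (e : Fin 5 →₀ ℕ) (v : ℕ) : wt (e.update 1 v) = wt e := by
  simp [wt, update1_apply]

lemma prod_sv (d : Fin 5 →₀ ℕ) :
    (∏ i, sv K i ^ d i) = monomial (d.update 1 (d 1 + wt d)) 1 := by
  rw [Fin.prod_univ_five]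
  show (X 1 * X 0) ^ d 0 * X 1 ^ d 1 * (X 1 * X 2) ^ d 2 * (X 1 * X 3) ^ d 3 *
      (X 1 * X 4) ^ d 4 = _
  rw [mul_pow, mul_pow, mul_pow, mul_pow]
  simp only [X_pow_eq]
  simp only [monomial_mul_monomial, one_mul, mul_one]
  refine congrArg (fun m : Fin 5 →₀ ℕ => monomial m 1) (fin5_ext ?_ ?_ ?_ ?_ ?_) <;>
    simp [Finsupp.single_apply, update1_apply, wt] <;> omega

lemma coeff_subst (G : MvPowerSeries (Fin 5) K) (e : Fin 5 →₀ ℕ) :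
    coeff e (psSubst (sv K) G) =
      if wt e ≤ e 1 then coeff (e.update 1 (e 1 - wt e)) G else 0 := by
  classical
  rw [coeff_apply, psSubst]
  simp only [prod_sv, coeff_monomial]
  by_cases h : wt e ≤ e 1
  · rw [if_pos h]
    rw [Finset.sum_eq_single (e.update 1 (e 1 - wt e))]
    · rw [if_pos, mul_one]
      apply fin5_ext <;> simp [update1_apply, wt_update] <;> omega
    · intro d _ hd
      rw [if_neg, mul_zero]
      intro hde
      apply hd
      have hc : ∀ i, (Finsupp.update d 1 (d 1 + wt d)) i = e i := fun i => by rw [hde]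
      have h0 := hc 0; have h1 := hc 1; have h2 := hc 2; have h3 := hc 3; have h4 := hc 4
      simp only [update1_apply] at h0 h1 h2 h3 h4
      simp at h0 h1 h2 h3 h4
      apply fin5_ext <;> simp [update1_apply] <;> simp [wt] at h1 ⊢ <;> omega
    · intro hmem
      exfalso
      apply hmem
      rw [Finset.mem_Iic, Finsupp.le_def]
      intro i
      have hsum := sum_eq e
      simp only [Finsupp.coe_equivFunOnFinite_symm]
      rw [hsum]
      fin_cases i <;> simp [update1_apply, wt] <;> omega
  · rw [if_neg h]
    apply Finset.sum_eq_zero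
    intro d _
    rw [if_neg, mul_zero]
    intro hde
    apply h
    have hc : ∀ i, (Finsupp.update d 1 (d 1 + wt d)) i = e i := fun i => by rw [hde]
    have h0 := hc 0; have h1 := hc 1; have h2 := hc 2; have h3 := hc 3; have h4 := hc 4
    simp only [update1_apply] at h0 h1 h2 h3 h4
    simp at h0 h1 h2 h3 h4
    simp only [wt] at *
    omega


lemma le5 {m x : Fin 5 →₀ ℕ} :
    m ≤ x ↔ m 0 ≤ x 0 ∧ m 1 ≤ x 1 ∧ m 2 ≤ x 2 ∧ m 3 ≤ x 3 ∧ m 4 ≤ x 4 := by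
  rw [Finsupp.le_def]
  constructor
  · intro h; exact ⟨h 0, h 1, h 2, h 3, h 4⟩
  · rintro ⟨h0, h1, h2, h3, h4⟩ i; fin_cases i <;> assumption

lemma update_update (e : Fin 5 →₀ ℕ) (v w : ℕ) :
    (e.update 1 v).update 1 w = e.update 1 w := by
  apply fin5_ext <;> simp [update1_apply]

lemma update_zero : (0 : Fin 5 →₀ ℕ).update 1 0 = 0 := by
  apply fin5_ext <;> simp [update1_apply]

lemma upd_app0 (e : Fin 5 →₀ ℕ) (v : ℕ) : (e.update 1 v) 0 = e 0 := by simp [update1_apply]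
lemma upd_app1 (e : Fin 5 →₀ ℕ) (v : ℕ) : (e.update 1 v) 1 = v := by simp [update1_apply]
lemma upd_app2 (e : Fin 5 →₀ ℕ) (v : ℕ) : (e.update 1 v) 2 = e 2 := by simp [update1_apply]
lemma upd_app3 (e : Fin 5 →₀ ℕ) (v : ℕ) : (e.update 1 v) 3 = e 3 := by simp [update1_apply]
lemma upd_app4 (e : Fin 5 →₀ ℕ) (v : ℕ) : (e.update 1 v) 4 = e 4 := by simp [update1_apply]

lemma coeff_iter (k : ℕ) (G : MvPowerSeries (Fin 5) K) (e : Fin 5 →₀ ℕ) :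
    coeff e ((psSubst (sv K))^[k] G) =
      if k * wt e ≤ e 1 then coeff (e.update 1 (e 1 - k * wt e)) G else 0 := by
  induction k generalizing G e with
  | zero => simp [Finsupp.update_self]
  | succ k ih =>
    rw [Function.iterate_succ_apply', coeff_subst, Nat.succ_mul]
    by_cases hb : wt e ≤ e 1
    · rw [if_pos hb, ih, wt_update, update_update]
      have h1 : (e.update 1 (e 1 - wt e)) 1 = e 1 - wt e := by simp [update1_apply]
      rw [h1]
      have harg : e 1 - wt e - k * wt e = e 1 - (k * wt e + wt e) := by omega
      rw [harg]
      by_cases hc : k * wt e ≤ e 1 - wt e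
      · rw [if_pos hc, if_pos (by omega)]
      · rw [if_neg hc, if_neg (by omega)]
    · rw [if_neg hb, if_neg (by omega)]

lemma iter_add (k : ℕ) (F G : MvPowerSeries (Fin 5) K) :
    (psSubst (sv K))^[k] (F + G) = (psSubst (sv K))^[k] F + (psSubst (sv K))^[k] G := by
  ext e
  simp only [map_add, coeff_iter]
  split_ifs <;> simp

lemma iter_one (k : ℕ) : (psSubst (sv K))^[k] (1 : MvPowerSeries (Fin 5) K) = 1 := by
  classical
  ext e
  rw [coeff_iter, coeff_one, coeff_one]
  by_cases he : e = 0
  · subst he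
    have h0 : wt (0 : Fin 5 →₀ ℕ) = 0 := by simp [wt]
    rw [h0]
    simp [update_zero]
  · rw [if_neg he]
    by_cases hc : k * wt e ≤ e 1
    · rw [if_pos hc, if_neg]
      intro h
      apply he
      have hc0 : ∀ i, (e.update 1 (e 1 - k * wt e)) i = 0 := fun i => by rw [h]; rfl
      have h0 := hc0 0; have h1 := hc0 1; have h2 := hc0 2; have h3 := hc0 3
      have h4 := hc0 4
      rw [upd_app0] at h0; rw [upd_app1] at h1; rw [upd_app2] at h2
      rw [upd_app3] at h3; rw [upd_app4] at h4
      have hw0 : wt e = 0 := by simp only [wt]; omega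
      have hk0 : k * wt e = 0 := by rw [hw0, mul_zero]
      apply fin5_ext <;> simp <;> omega
    · rw [if_neg hc]

lemma iter_monomial_mul (k : ℕ) (m : Fin 5 →₀ ℕ) (c : K) (G : MvPowerSeries (Fin 5) K) :
    (psSubst (sv K))^[k] (monomial m c * G) =
      monomial (m.update 1 (m 1 + k * wt m)) c * (psSubst (sv K))^[k] G := by
  classical
  ext e
  rw [coeff_iter, coeff_monomial_mul, coeff_monomial_mul, coeff_iter]
  set M := m.update 1 (m 1 + k * wt m) with hM
  have hM1 : M 1 = m 1 + k * wt m := upd_app1 _ _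
  have hM0 : M 0 = m 0 := upd_app0 _ _
  have hM2 : M 2 = m 2 := upd_app2 _ _
  have hM3 : M 3 = m 3 := upd_app3 _ _
  have hM4 : M 4 = m 4 := upd_app4 _ _
  set A := k * wt e with hA
  set B := k * wt m with hB
  have hmulle : ∀ u v : ℕ, u ≤ v → k * u ≤ k * v := fun u v h => Nat.mul_le_mul_left _ h
  have hmulsub : ∀ u v : ℕ, k * (u - v) = k * u - k * v := fun u v => Nat.mul_sub ..
  clear_value A B
  by_cases hR : M ≤ e
  · rw [if_pos hR]
    have hRle := le5.mp hR
    rw [hM0, hM1, hM2, hM3, hM4] at hRle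
    have hwtm : wt m ≤ wt e := by
      have h1 := hRle.1; have h2 := hRle.2.2.1; have h3 := hRle.2.2.2.1
      have h4 := hRle.2.2.2.2
      simp only [wt]; omega
    have hkle : B ≤ A := by rw [hA, hB]; exact hmulle _ _ hwtm
    have hwE : wt (e - M) = wt e - wt m := by
      simp only [wt, Finsupp.tsub_apply, hM0, hM2, hM3, hM4]
      have h1 := hRle.1; have h2 := hRle.2.2.1; have h3 := hRle.2.2.2.1
      have h4 := hRle.2.2.2.2
      simp only [wt] at *
      omega
    have hE1 : (e - M) 1 = e 1 - (m 1 + B) := by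
      rw [Finsupp.tsub_apply, hM1]
    rw [hwE, hE1]
    have hkw : k * (wt e - wt m) = A - B := by
      rw [hA, hB]; exact hmulsub _ _
    rw [hkw]
    by_cases hC1 : A ≤ e 1
    · rw [if_pos hC1]
      by_cases hL2 : m ≤ e.update 1 (e 1 - A)
      · have hL := le5.mp hL2
        rw [upd_app0, upd_app1, upd_app2, upd_app3, upd_app4] at hL
        have hL1 := hL.2.1
        rw [if_pos hL2, if_pos (by omega)]
        have harg : e.update 1 (e 1 - A) - m
            = (e - M).update 1 (e 1 - (m 1 + B) - (A - B)) := by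
          apply fin5_ext <;>
            simp only [Finsupp.tsub_apply, upd_app0, upd_app1, upd_app2, upd_app3,
              upd_app4, hM0, hM1, hM2, hM3, hM4] <;> omega
        rw [harg]
      · rw [if_neg hL2, if_neg, mul_zero]
        intro hcon
        apply hL2
        rw [le5, upd_app0, upd_app1, upd_app2, upd_app3, upd_app4]
        exact ⟨hRle.1, by omega, hRle.2.2.1, hRle.2.2.2.1, hRle.2.2.2.2⟩
    · rw [if_neg hC1, if_neg (by omega), mul_zero]
  · rw [if_neg hR]
    by_cases hC1 : A ≤ e 1
    · rw [if_pos hC1, if_neg]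
      intro hL2
      apply hR
      have hL := le5.mp hL2
      rw [upd_app0, upd_app1, upd_app2, upd_app3, upd_app4] at hL
      have hwtm : wt m ≤ wt e := by
        have h1 := hL.1; have h2 := hL.2.2.1; have h3 := hL.2.2.2.1
        have h4 := hL.2.2.2.2
        simp only [wt]; omega
      have hkle : B ≤ A := by rw [hA, hB]; exact hmulle _ _ hwtm
      rw [le5, hM0, hM1, hM2, hM3, hM4]
      refine ⟨hL.1, by omega, hL.2.2.1, hL.2.2.2.1, hL.2.2.2.2⟩
    · rw [if_neg hC1]

lemma constCoeff_iter (G : MvPowerSeries (Fin 5) K) (k : ℕ) :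
    constantCoeff ((psSubst (sv K))^[k] G) = constantCoeff G := by
  rw [← coeff_zero_eq_constantCoeff, coeff_iter]
  have h0 : wt (0 : Fin 5 →₀ ℕ) = 0 := by simp [wt]
  rw [h0]
  simp [update_zero]

lemma iter_monomial (k : ℕ) (m : Fin 5 →₀ ℕ) (c : K) :
    (psSubst (sv K))^[k] (monomial m c) =
      monomial (m.update 1 (m 1 + k * wt m)) c := by
  have h := iter_monomial_mul (K := K) k m c 1
  rw [mul_one, iter_one, mul_one] at h
  exact h

lemma avoids_iter {G : MvPowerSeries (Fin 5) K} (h : avoids 0 G) (k : ℕ) :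
    avoids 0 ((psSubst (sv K))^[k] G) := by
  intro e he
  rw [coeff_iter]
  split_ifs with hc
  · exact h _ (by rw [upd_app0]; exact he)
  · rfl

lemma mon_congr {m1 m2 : Fin 5 →₀ ℕ} (G : MvPowerSeries (Fin 5) K) (h : m1 = m2) :
    monomial m1 1 * G = monomial m2 1 * G := by rw [h]

lemma mon_congr' {m1 m2 : Fin 5 →₀ ℕ} (h : m1 = m2) :
    (monomial m1 1 : MvPowerSeries (Fin 5) K) = monomial m2 1 := by rw [h]

lemma mon_mul_mon_mul (u v : Fin 5 →₀ ℕ) (G : MvPowerSeries (Fin 5) K) :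
    monomial u 1 * (monomial v 1 * G) = monomial (u + v) 1 * G := by
  rw [← mul_assoc, monomial_mul_monomial, one_mul]

end OddpAux

open OddpAux

set_option maxHeartbeats 2000000 in
/-- Odd-characteristic example, blowups (2): `(p−1)/2`-fold iteration
of the monomial `x`-chart point blowup (`z ↦ xz`, `x ↦ x`, `y ↦ xy`, `v ↦ xv`, `w ↦ xw`).
Variables: `z = X 0`, `x = X 1`, `y = X 2`, `v = X 3`, `w = X 4`.  The residual factor
afterwards has order `d′ + (p²+1)/2 = d + p² − (p−1)/2`. -/
theorem oddp_second_blowups (p : ℕ) (hp : p.Prime) (hpodd : Odd p)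
    (K : Type*) [Field K]
    (d a s : ℕ) (hd2 : 2 ≤ d) (hs1 : 1 ≤ s) (hs : d ≤ s * p ^ 3)
    (q d' : ℕ) (hq : q = (p + 1) * (d + p ^ 2 - 1) / 2) (hd' : d' = d + p * (p - 1) / 2)
    (B A Q : MvPowerSeries (Fin 5) K) (hBz : avoids 0 B) (hAz : avoids 0 A)
    (hQz : avoids 0 Q)
    (hB : constantCoeff B ≠ 0) (hA : constantCoeff A ≠ 0)
    (f : MvPowerSeries (Fin 5) K)
    (hf : f = X 0 ^ p ^ 3 + X 1 ^ (a * p ^ 3) * X 4 ^ (s * p ^ 3 - d) *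
        (X 2 ^ p ^ 2 * X 4 ^ d * B + X 1 ^ q * X 4 ^ d * Q + X 1 ^ (q + 1) * A))
    (σ : MvPowerSeries (Fin 5) K → MvPowerSeries (Fin 5) K)
    (hσ : σ = psSubst ![X 1 * X 0, X 1, X 1 * X 2, X 1 * X 3, X 1 * X 4]) :
    ∃ B' A' : MvPowerSeries (Fin 5) K,
      avoids 0 B' ∧ avoids 0 A' ∧
      constantCoeff B' ≠ 0 ∧ constantCoeff A' ≠ 0 ∧
      σ^[(p - 1) / 2] f = X 1 ^ (p ^ 3 * ((p - 1) / 2)) * (X 0 ^ p ^ 3 +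
        X 1 ^ ((a + (s - 1) * ((p - 1) / 2)) * p ^ 3 + (p ^ 3 - p ^ 2) / 2) *
          X 4 ^ (s * p ^ 3 - d) *
          (X 2 ^ p ^ 2 * X 4 ^ d * B' + X 1 ^ (d' + (p ^ 2 + 1) / 2) * A')) ∧
      ordIs (X 2 ^ p ^ 2 * X 4 ^ d * B' + X 1 ^ (d' + (p ^ 2 + 1) / 2) * A')
        (d' + (p ^ 2 + 1) / 2) ∧
      d' + (p ^ 2 + 1) / 2 = d + p ^ 2 - (p - 1) / 2 := by
  classical
  obtain ⟨t, ht⟩ := hpodd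
  have hpt : p = 2 * t + 1 := by omega
  subst hpt
  clear ht
  have ht1 : 1 ≤ t := by have := hp.two_le; omega
  have hk : (2 * t + 1 - 1) / 2 = t := by omega
  have hp2 : (2 * t + 1) ^ 2 = 4 * t ^ 2 + 4 * t + 1 := by ring
  have hp3 : (2 * t + 1) ^ 3 = 8 * t ^ 3 + 12 * t ^ 2 + 6 * t + 1 := by ring
  have h32 : ((2 * t + 1) ^ 3 - (2 * t + 1) ^ 2) / 2 = 4 * t ^ 3 + 4 * t ^ 2 + t := by omega
  have h12 : ((2 * t + 1) ^ 2 + 1) / 2 = 2 * t ^ 2 + 2 * t + 1 := by omega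
  have hqq : q = (t + 1) * (d + 4 * t ^ 2 + 4 * t) := by
    rw [hq]
    have h1 : (2 * t + 1 + 1) * (d + (2 * t + 1) ^ 2 - 1)
        = 2 * ((t + 1) * (d + 4 * t ^ 2 + 4 * t)) := by
      have h2 : d + (2 * t + 1) ^ 2 - 1 = d + (4 * t ^ 2 + 4 * t) := by omega
      rw [h2]; ring
    omega
  have hdd : d' = d + (2 * t ^ 2 + t) := by
    rw [hd']
    have h1 : (2 * t + 1) * (2 * t + 1 - 1) = 2 * (2 * t ^ 2 + t) := by
      have h2 : 2 * t + 1 - 1 = 2 * t := by omega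
      rw [h2]; ring
    omega
  have htd : 1 ≤ t * d := by
    calc (1 : ℕ) = 1 * 1 := by ring
    _ ≤ t * d := Nat.mul_le_mul ht1 (by omega)
  have hsv : (psSubst (sv K) : MvPowerSeries (Fin 5) K → MvPowerSeries (Fin 5) K)
      = psSubst ![X 1 * X 0, X 1, X 1 * X 2, X 1 * X 3, X 1 * X 4] := rfl
  set A' : MvPowerSeries (Fin 5) K :=
    monomial (Finsupp.single 1 (t * d - 1) + Finsupp.single 4 d) 1 * (psSubst (sv K))^[t] Q
      + (psSubst (sv K))^[t] A with hA'
  have hA'c : constantCoeff A' ≠ 0 := by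
    have h1 : constantCoeff
        (monomial (Finsupp.single 1 (t * d - 1) + Finsupp.single 4 d) 1
          * (psSubst (sv K))^[t] Q) = 0 := by
      rw [← coeff_zero_eq_constantCoeff, coeff_monomial_mul, if_neg]
      intro hle
      have h2 := le5.mp hle
      simp [Finsupp.single_apply] at h2
      omega
    rw [hA', map_add, h1, zero_add, constCoeff_iter]
    exact hA
  refine ⟨(psSubst (sv K))^[t] B, A', avoids_iter hBz t, ?_, ?_, hA'c, ?_, ?_, ?_⟩
  · -- avoids 0 A'
    intro e he
    rw [hA', map_add, coeff_monomial_mul, avoids_iter hAz t _ he, add_zero]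
    split_ifs with hle
    · rw [one_mul]
      apply avoids_iter hQz t
      rw [Finsupp.tsub_apply]
      have h2 : ((Finsupp.single 1 (t * d - 1) + Finsupp.single 4 d : Fin 5 →₀ ℕ)) 0 = 0 := by
        simp [Finsupp.single_apply]
      omega
    · rfl
  · -- constantCoeff B'
    rw [constCoeff_iter]; exact hB
  · -- main equation
    rw [hσ, ← hsv, hf, hqq, hdd, h12, h32, hk]
    simp only [X_pow_eq, mul_add, mul_assoc, mon_mul_mon_mul, monomial_mul_monomial,
      one_mul, mul_one]
    simp only [iter_add, iter_monomial_mul, iter_monomial]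
    rw [hA']
    simp only [mul_add, mon_mul_mon_mul, add_assoc]
    refine congrArg₂ (· + ·) (mon_congr' ?_) (congrArg₂ (· + ·) (mon_congr _ ?_)
      (congrArg₂ (· + ·) (mon_congr _ ?_) (mon_congr _ ?_))) <;>
      apply fin5_ext <;>
      simp [upd_app0, upd_app1, upd_app2, upd_app3, upd_app4, OddpAux.wt,
        Finsupp.add_apply, Finsupp.single_apply, update1_apply] <;>
      first
        | rfl
        | omega
        | (zify [hs, hs1, htd]; ring)
  · -- ordIs
    have hFle : d' + ((2 * t + 1) ^ 2 + 1) / 2 ≤ (2 * t + 1) ^ 2 + d := by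
      rw [hdd, h12]; omega
    constructor
    · refine ⟨Finsupp.single 1 (d' + ((2 * t + 1) ^ 2 + 1) / 2), ?_, ?_⟩
      · rw [sum_eq]
        simp [OddpAux.wt, Finsupp.single_apply]
      · have h1 : ¬ ((Finsupp.single 2 ((2 * t + 1) ^ 2) + Finsupp.single 4 d : Fin 5 →₀ ℕ)
            ≤ Finsupp.single 1 (d' + ((2 * t + 1) ^ 2 + 1) / 2)) := by
          intro hle
          have h2 := (le5.mp hle).2.2.1
          simp [Finsupp.single_apply] at h2
          try omega
        rw [map_add, X_pow_eq, X_pow_eq, X_pow_eq, monomial_mul_monomial, one_mul,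
          coeff_monomial_mul, coeff_monomial_mul, if_neg h1, if_pos le_rfl, zero_add,
          one_mul, tsub_self, coeff_zero_eq_constantCoeff]
        exact hA'c
    · intro e he
      rw [map_add, X_pow_eq, X_pow_eq, X_pow_eq, monomial_mul_monomial, one_mul,
        coeff_monomial_mul, coeff_monomial_mul] at he
      rw [sum_eq]
      simp only [OddpAux.wt]
      split_ifs at he with h1 h2 h2
      · have h3 := le5.mp h1
        simp [Finsupp.single_apply] at h3
        omega
      · have h3 := le5.mp h1
        simp [Finsupp.single_apply] at h3
        omega
      · have h3 := Finsupp.single_le_iff.mp h2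
        omega
      · simp at he
  · -- final arithmetic
    rw [hdd, h12, hk]
    omega
end
end

section
/- Let p be an odd prime, K a field, R = K[[z,x,y,v,w]]. Let d ≥ 1 be divisible by p(p−1)/2, set d′ = d + p(p−1)/2 and m = 2d/(p−1) + p − 1; let a ≥ 0, s ≥ 1 be integers with s·p³ ≥ d, and let B, A ∈ K[[x,y,v,w]] be units. Set f = z^{p³} + x^{ap³+(p³−p²)/2} w^{sp³−d}·( y^{p²} w^{d}·B + x^{d′+(p²+1)/2}·A ). Let σ_v : R → R be the monomial v-chart substitution z↦vz, x↦vx, y↦vy, v↦v, w↦vw. Then for every integer k ≥ 0, σ_v^{k}(f) = v^{kp³}·( z^{p³} + x^{ap³+(p³−p²)/2} v^{k((a+s−1)p³+(p³+p²−p+1)/2)} w^{sp³−d}·( y^{p²} v^{k(p−1)/2} w^{d}·B_k + x^{d′+(p²+1)/2}·A_k ) ), where B_k, A_k are the (unit) images of B, A under the k-fold substitution. In particular, for k = m the first term inside the parenthesis is y^{p²} v^{d+(p−1)²/2} w^{d}·B_m. -/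
noncomputable section

open MvPowerSeries

namespace Mv5

def S (K : Type*) [Field K] : Fin 5 → MvPowerSeries (Fin 5) K :=
  ![X 3 * X 0, X 3 * X 1, X 3 * X 2, X 3, X 3 * X 4]

def Mmap (e : Fin 5 →₀ ℕ) : Fin 5 →₀ ℕ := e + Finsupp.single 3 (e 0 + e 1 + e 2 + e 4)

@[simp] lemma Mmap_a0 (e : Fin 5 →₀ ℕ) : Mmap e 0 = e 0 := by
  simp [Mmap, Finsupp.single_apply]
@[simp] lemma Mmap_a1 (e : Fin 5 →₀ ℕ) : Mmap e 1 = e 1 := by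
  simp [Mmap, Finsupp.single_apply]
@[simp] lemma Mmap_a2 (e : Fin 5 →₀ ℕ) : Mmap e 2 = e 2 := by
  simp [Mmap, Finsupp.single_apply]
@[simp] lemma Mmap_a3 (e : Fin 5 →₀ ℕ) : Mmap e 3 = e 0 + e 1 + e 2 + e 3 + e 4 := by
  simp [Mmap, Finsupp.single_apply]; ring
@[simp] lemma Mmap_a4 (e : Fin 5 →₀ ℕ) : Mmap e 4 = e 4 := by
  simp [Mmap, Finsupp.single_apply]

lemma finsupp5_ext {a b : Fin 5 →₀ ℕ} (h0 : a 0 = b 0) (h1 : a 1 = b 1) (h2 : a 2 = b 2)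
    (h3 : a 3 = b 3) (h4 : a 4 = b 4) : a = b := by
  ext i; fin_cases i <;> assumption

lemma Mmap_add (a b : Fin 5 →₀ ℕ) : Mmap (a + b) = Mmap a + Mmap b := by
  apply finsupp5_ext <;> simp <;> ring

lemma Mmap_inj : Function.Injective Mmap := by
  intro a b h
  have h0 : Mmap a 0 = Mmap b 0 := by rw [h]
  have h1 : Mmap a 1 = Mmap b 1 := by rw [h]
  have h2 : Mmap a 2 = Mmap b 2 := by rw [h]
  have h3 : Mmap a 3 = Mmap b 3 := by rw [h]
  have h4 : Mmap a 4 = Mmap b 4 := by rw [h]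
  simp only [Mmap_a0, Mmap_a1, Mmap_a2, Mmap_a3, Mmap_a4] at h0 h1 h2 h3 h4
  apply finsupp5_ext h0 h1 h2 ?_ h4
  omega

lemma Mmap_mono {a b : Fin 5 →₀ ℕ} (h : a ≤ b) : Mmap a ≤ Mmap b := by
  have h' := Finsupp.le_def.mp h
  rw [Finsupp.le_def]
  intro i
  fin_cases i <;> simp <;>
    [exact h' 0; exact h' 1; exact h' 2;
     (have := h' 0; have := h' 1; have := h' 2; have := h' 3; have := h' 4; omega);
     exact h' 4]

lemma Mmap_sub {a b : Fin 5 →₀ ℕ} (h : a ≤ b) : Mmap (b - a) = Mmap b - Mmap a := by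
  have h' := Finsupp.le_def.mp h
  have e0 := h' 0; have e1 := h' 1; have e2 := h' 2; have e3 := h' 3; have e4 := h' 4
  apply finsupp5_ext <;> simp [Finsupp.tsub_apply] <;> omega

end Mv5

namespace Mv5

variable {K : Type*} [Field K]

lemma sum5 (e : Fin 5 →₀ ℕ) : (e.sum fun _ k => k) = e 0 + e 1 + e 2 + e 3 + e 4 := by
  rw [Finsupp.sum_fintype _ _ fun _ => rfl, Fin.sum_univ_five]

lemma le_total_deg (e : Fin 5 →₀ ℕ) (i : Fin 5) : e i ≤ e.sum fun _ k => k := by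
  by_cases h : i ∈ e.support
  · exact Finset.single_le_sum (f := fun j => e j) (fun _ _ => Nat.zero_le _) h
  · simp [Finsupp.notMem_support_iff.mp h]

lemma prod_S_pow (d : Fin 5 →₀ ℕ) :
    (∏ i, (S K) i ^ d i) = monomial (Mmap d) 1 := by
  rw [Fin.prod_univ_five]
  simp only [S, Matrix.cons_val_zero, Matrix.cons_val_one, Matrix.head_cons,
    Matrix.cons_val_two, Matrix.tail_cons, Matrix.cons_val_three, Matrix.cons_val_four]
  simp only [mul_pow, X_pow_eq, monomial_mul_monomial, one_mul]
  congr 1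
  congr 1
  apply finsupp5_ext <;> simp [Finsupp.single_apply]

lemma mem_bound {e d0 : Fin 5 →₀ ℕ} (h : Mmap d0 = e) :
    d0 ∈ Finset.Iic (Finsupp.equivFunOnFinite.symm fun _ : Fin 5 => e.sum fun _ k => k) := by
  rw [Finset.mem_Iic, Finsupp.le_def]
  intro i
  have h1 : d0 i ≤ Mmap d0 i := Finsupp.le_def.mp (self_le_add_right d0 _) i
  have h2 := le_total_deg e i
  have h1' : d0 i ≤ e i := h ▸ h1
  simpa using h1'.trans h2

lemma coeff_psSubst_eq (g : MvPowerSeries (Fin 5) K) {e d0 : Fin 5 →₀ ℕ} (h : Mmap d0 = e) :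
    coeff e (psSubst (S K) g) = coeff d0 g := by
  rw [coeff_apply]
  show (∑ d ∈ _, coeff d g * coeff e (∏ i, (S K) i ^ d i)) = _
  rw [Finset.sum_eq_single_of_mem d0 (mem_bound h)]
  · rw [prod_S_pow, coeff_monomial, if_pos h.symm, mul_one]
  · intro b _ hb
    rw [prod_S_pow, coeff_monomial, if_neg, mul_zero]
    intro he
    exact hb (Mmap_inj (h ▸ he.symm))

lemma coeff_psSubst_zero (g : MvPowerSeries (Fin 5) K) (e : Fin 5 →₀ ℕ)
    (h : ∀ d, Mmap d ≠ e) : coeff e (psSubst (S K) g) = 0 := by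
  rw [coeff_apply]
  show (∑ d ∈ _, coeff d g * coeff e (∏ i, (S K) i ^ d i)) = _
  apply Finset.sum_eq_zero
  intro b _
  rw [prod_S_pow, coeff_monomial, if_neg (fun he => h b he.symm), mul_zero]

end Mv5

namespace Mv5

variable {K : Type*} [Field K]

lemma psSubst_monomial_mul (α : Fin 5 →₀ ℕ) (c : K) (g : MvPowerSeries (Fin 5) K) :
    psSubst (S K) (monomial α c * g) =
      monomial (Mmap α) c * psSubst (S K) g := by
  ext e
  by_cases hex : ∃ d0, Mmap d0 = e
  · obtain ⟨d0, hd0⟩ := hex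
    rw [coeff_psSubst_eq _ hd0, coeff_monomial_mul, coeff_monomial_mul]
    by_cases hle : α ≤ d0
    · rw [if_pos hle, if_pos (hd0 ▸ Mmap_mono hle)]
      have hsub : e - Mmap α = Mmap (d0 - α) := by rw [Mmap_sub hle, hd0]
      rw [hsub, coeff_psSubst_eq _ rfl]
    · rw [if_neg hle]
      by_cases hMle : Mmap α ≤ e
      · rw [if_pos hMle, coeff_psSubst_zero, mul_zero]
        intro d' hd'
        apply hle
        have h1 : Mmap d' + Mmap α = e := by
          rw [hd']; exact tsub_add_cancel_of_le hMle
        have h2 : d' + α = d0 := Mmap_inj (by rw [Mmap_add, h1, hd0])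
        exact h2 ▸ le_add_self
      · rw [if_neg hMle]
  · push_neg at hex
    rw [coeff_psSubst_zero _ _ hex, coeff_monomial_mul]
    by_cases hMle : Mmap α ≤ e
    · rw [if_pos hMle, coeff_psSubst_zero, mul_zero]
      intro d' hd'
      exact hex (d' + α) (by rw [Mmap_add, hd', tsub_add_cancel_of_le hMle])
    · rw [if_neg hMle]

lemma psSubst_add {n : ℕ} (s : Fin n → MvPowerSeries (Fin n) K)
    (f g : MvPowerSeries (Fin n) K) :
    psSubst s (f + g) = psSubst s f + psSubst s g := by
  ext e
  rw [map_add, coeff_apply, coeff_apply, coeff_apply]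
  show (∑ d ∈ _, _) = (∑ d ∈ _, _) + (∑ d ∈ _, _)
  rw [← Finset.sum_add_distrib]
  exact Finset.sum_congr rfl fun d _ => by rw [map_add, add_mul]

lemma psSubst_one : psSubst (S K) (1 : MvPowerSeries (Fin 5) K) = 1 := by
  ext e
  have hM0 : Mmap (0 : Fin 5 →₀ ℕ) = 0 := by apply finsupp5_ext <;> simp
  by_cases he : e = 0
  · subst he
    rw [coeff_psSubst_eq _ hM0]
  · rw [coeff_one, if_neg he]
    by_cases hex : ∃ d0, Mmap d0 = e
    · obtain ⟨d0, hd0⟩ := hex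
      rw [coeff_psSubst_eq _ hd0, coeff_one, if_neg]
      intro h0
      exact he (by rw [← hd0, h0, hM0])
    · push_neg at hex
      exact coeff_psSubst_zero _ _ hex

lemma constantCoeff_psSubst {n : ℕ} (s : Fin n → MvPowerSeries (Fin n) K)
    (f : MvPowerSeries (Fin n) K) :
    constantCoeff (psSubst s f) = constantCoeff f := by
  rw [← coeff_zero_eq_constantCoeff, coeff_apply]
  show (∑ d ∈ Finset.Iic (Finsupp.equivFunOnFinite.symm fun _ : Fin n =>
      (0 : Fin n →₀ ℕ).sum fun _ k => k), _) = _
  have h0 : (Finsupp.equivFunOnFinite.symm fun _ : Fin n =>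
      (0 : Fin n →₀ ℕ).sum fun _ k => k) = 0 := by
    ext i; simp
  rw [h0]
  have hIic : Finset.Iic (0 : Fin n →₀ ℕ) = {0} := by
    ext d; simp [Finset.mem_Iic, le_zero_iff]
  rw [hIic, Finset.sum_singleton]
  simp

end Mv5

namespace Mv5

variable {K : Type*} [Field K]

lemma Mmap_single3 (n : ℕ) : Mmap (Finsupp.single 3 n) = Finsupp.single 3 n := by
  apply finsupp5_ext <;> simp [Finsupp.single_apply]

lemma Mmap_single0 (n : ℕ) :
    Mmap (Finsupp.single 0 n) = Finsupp.single 3 n + Finsupp.single 0 n := by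
  apply finsupp5_ext <;> simp [Finsupp.single_apply]

lemma Mmap_single1 (n : ℕ) :
    Mmap (Finsupp.single 1 n) = Finsupp.single 3 n + Finsupp.single 1 n := by
  apply finsupp5_ext <;> simp [Finsupp.single_apply]

lemma Mmap_single2 (n : ℕ) :
    Mmap (Finsupp.single 2 n) = Finsupp.single 3 n + Finsupp.single 2 n := by
  apply finsupp5_ext <;> simp [Finsupp.single_apply]

lemma Mmap_single4 (n : ℕ) :
    Mmap (Finsupp.single 4 n) = Finsupp.single 3 n + Finsupp.single 4 n := by
  apply finsupp5_ext <;> simp [Finsupp.single_apply]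

lemma monX (i : Fin 5) (n : ℕ) :
    monomial (Finsupp.single 3 n + Finsupp.single i n) (1 : K) = X 3 ^ n * X i ^ n := by
  rw [X_pow_eq, X_pow_eq, monomial_mul_monomial, one_mul]

lemma psSubst_X3_mul (n : ℕ) (g : MvPowerSeries (Fin 5) K) :
    psSubst (S K) (X 3 ^ n * g) = X 3 ^ n * psSubst (S K) g := by
  rw [X_pow_eq, psSubst_monomial_mul, Mmap_single3, ← X_pow_eq]

lemma psSubst_X0_mul (n : ℕ) (g : MvPowerSeries (Fin 5) K) :
    psSubst (S K) (X 0 ^ n * g) = X 3 ^ n * (X 0 ^ n * psSubst (S K) g) := by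
  rw [X_pow_eq, psSubst_monomial_mul, Mmap_single0, monX, mul_assoc, ← X_pow_eq]

lemma psSubst_X1_mul (n : ℕ) (g : MvPowerSeries (Fin 5) K) :
    psSubst (S K) (X 1 ^ n * g) = X 3 ^ n * (X 1 ^ n * psSubst (S K) g) := by
  rw [X_pow_eq, psSubst_monomial_mul, Mmap_single1, monX, mul_assoc, ← X_pow_eq]

lemma psSubst_X2_mul (n : ℕ) (g : MvPowerSeries (Fin 5) K) :
    psSubst (S K) (X 2 ^ n * g) = X 3 ^ n * (X 2 ^ n * psSubst (S K) g) := by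
  rw [X_pow_eq, psSubst_monomial_mul, Mmap_single2, monX, mul_assoc, ← X_pow_eq]

lemma psSubst_X4_mul (n : ℕ) (g : MvPowerSeries (Fin 5) K) :
    psSubst (S K) (X 4 ^ n * g) = X 3 ^ n * (X 4 ^ n * psSubst (S K) g) := by
  rw [X_pow_eq, psSubst_monomial_mul, Mmap_single4, monX, mul_assoc, ← X_pow_eq]

lemma step_core {R : Type*} [CommRing R] (x0 x1 x2 x3 x4 Bk Ak : R)
    (P G α β γ q ε dd k : ℕ)
    (key1 : α + γ + ε = P + β) (key2 : α + γ + G + dd = P + β + q) :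
    x3 ^ (k * P) * (x3 ^ P * (x0 ^ P * 1))
      + x3 ^ (k * P) * (x3 ^ α * (x1 ^ α * (x3 ^ (k * β) * (x3 ^ γ * (x4 ^ γ *
          (x3 ^ G * (x2 ^ G * (x3 ^ (k * q) * (x3 ^ dd * (x4 ^ dd * Bk))))))))))
      + x3 ^ (k * P) * (x3 ^ α * (x1 ^ α * (x3 ^ (k * β) * (x3 ^ γ * (x4 ^ γ *
          (x3 ^ ε * (x1 ^ ε * Ak)))))))
    = x3 ^ ((k + 1) * P) * (x0 ^ P +
        x1 ^ α * x3 ^ ((k + 1) * β) * x4 ^ γ *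
          (x2 ^ G * x3 ^ ((k + 1) * q) * x4 ^ dd * Bk + x1 ^ ε * Ak)) := by
  have e1 : (k + 1) * P = k * P + P := by ring
  have e2 : (k + 1) * β = k * β + β := by ring
  have e3 : (k + 1) * q = k * q + q := by ring
  rw [e1, e2, e3, pow_add, pow_add, pow_add]
  have hB : x3 ^ α * x3 ^ γ * x3 ^ G * x3 ^ dd = x3 ^ P * x3 ^ β * x3 ^ q := by
    rw [← pow_add, ← pow_add, ← pow_add, ← pow_add, ← pow_add, key2]
  have hA : x3 ^ α * x3 ^ γ * x3 ^ ε = x3 ^ P * x3 ^ β := by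
    rw [← pow_add, ← pow_add, ← pow_add, key1]
  linear_combination
    (x3 ^ (k * P) * x1 ^ α * x3 ^ (k * β) * x4 ^ γ * x2 ^ G * x3 ^ (k * q) * x4 ^ dd * Bk) * hB
    + (x3 ^ (k * P) * x1 ^ α * x3 ^ (k * β) * x4 ^ γ * x1 ^ ε * Ak) * hA

end Mv5

namespace Mv5

lemma expand_form {R : Type*} [CommRing R] (x0 x1 x2 x3 x4 Bk Ak : R)
    (P G α kβ γ kq ε dd kP : ℕ) :
    x3 ^ kP * (x0 ^ P +
        x1 ^ α * x3 ^ kβ * x4 ^ γ * (x2 ^ G * x3 ^ kq * x4 ^ dd * Bk + x1 ^ ε * Ak))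
      = x3 ^ kP * (x0 ^ P * 1)
        + x3 ^ kP * (x1 ^ α * (x3 ^ kβ * (x4 ^ γ *
            (x2 ^ G * (x3 ^ kq * (x4 ^ dd * Bk))))))
        + x3 ^ kP * (x1 ^ α * (x3 ^ kβ * (x4 ^ γ * (x1 ^ ε * Ak)))) := by ring

lemma oddp_arith (p d a s : ℕ) (hp : p.Prime) (hpodd : Odd p) (hs1 : 1 ≤ s)
    (hs : d ≤ s * p ^ 3) :
    a * p ^ 3 + (p ^ 3 - p ^ 2) / 2 + (s * p ^ 3 - d) +
        (d + p * (p - 1) / 2 + (p ^ 2 + 1) / 2)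
      = p ^ 3 + ((a + s - 1) * p ^ 3 + (p ^ 3 + p ^ 2 - p + 1) / 2) ∧
    a * p ^ 3 + (p ^ 3 - p ^ 2) / 2 + (s * p ^ 3 - d) + p ^ 2 + d
      = p ^ 3 + ((a + s - 1) * p ^ 3 + (p ^ 3 + p ^ 2 - p + 1) / 2) + (p - 1) / 2 := by
  obtain ⟨r, rfl⟩ := hpodd
  have h2p := hp.two_le
  have hr1 : 1 ≤ r := by omega
  have hQ1 : ((2 * r + 1) ^ 3 - (2 * r + 1) ^ 2) / 2 = (2 * r + 1) ^ 2 * r := by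
    rw [Nat.sub_eq_of_eq_add (show (2*r+1)^3 = 2*((2*r+1)^2*r) + (2*r+1)^2 by ring)]
    exact Nat.mul_div_cancel_left _ (by omega)
  have hQ2 : ((2 * r + 1) ^ 2 + 1) / 2 = 2 * r ^ 2 + 2 * r + 1 := by
    rw [show (2*r+1)^2 + 1 = 2*(2*r^2+2*r+1) by ring]
    exact Nat.mul_div_cancel_left _ (by omega)
  have hQ3 : ((2 * r + 1) ^ 3 + (2 * r + 1) ^ 2 - (2 * r + 1) + 1) / 2
      = 4 * r ^ 3 + 8 * r ^ 2 + 4 * r + 1 := by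
    rw [Nat.sub_eq_of_eq_add
      (show (2*r+1)^3 + (2*r+1)^2 = (8*r^3+16*r^2+8*r+1) + (2*r+1) by ring)]
    rw [show 8*r^3+16*r^2+8*r+1+1 = 2*(4*r^3+8*r^2+4*r+1) by ring]
    exact Nat.mul_div_cancel_left _ (by omega)
  have hpq : (2 * r + 1) * ((2 * r + 1) - 1) / 2 = (2 * r + 1) * r := by
    rw [show (2*r+1) - 1 = 2*r by omega, show (2*r+1)*(2*r) = 2*((2*r+1)*r) by ring]
    exact Nat.mul_div_cancel_left _ (by omega)
  have hq : ((2 * r + 1) - 1) / 2 = r := by omega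
  have has : 1 ≤ a + s := by omega
  rw [hQ1, hQ2, hQ3, hpq, hq]
  constructor <;> (zify [hs, has]; ring)

lemma oddp_marith (p d : ℕ) (hp : p.Prime) (hpodd : Odd p) (hddvd : p * (p - 1) / 2 ∣ d) :
    (2 * d / (p - 1) + p - 1) * ((p - 1) / 2) = d + (p - 1) ^ 2 / 2 := by
  obtain ⟨r, rfl⟩ := hpodd
  have h2p := hp.two_le
  have hr1 : 1 ≤ r := by omega
  have hpq : (2 * r + 1) * ((2 * r + 1) - 1) / 2 = (2 * r + 1) * r := by
    rw [show (2*r+1) - 1 = 2*r by omega, show (2*r+1)*(2*r) = 2*((2*r+1)*r) by ring]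
    exact Nat.mul_div_cancel_left _ (by omega)
  rw [hpq] at hddvd
  obtain ⟨u, rfl⟩ := hddvd
  have h2d : 2 * ((2 * r + 1) * r * u) / ((2 * r + 1) - 1) = (2 * r + 1) * u := by
    rw [show (2*r+1) - 1 = 2*r by omega,
      show 2*((2*r+1)*r*u) = (2*r)*((2*r+1)*u) by ring]
    exact Nat.mul_div_cancel_left _ (by omega)
  have hsq : ((2 * r + 1) - 1) ^ 2 / 2 = 2 * r ^ 2 := by
    rw [show (2*r+1) - 1 = 2*r by omega, show (2*r)^2 = 2*(2*r^2) by ring]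
    exact Nat.mul_div_cancel_left _ (by omega)
  have hq : ((2 * r + 1) - 1) / 2 = r := by omega
  rw [h2d, hq, hsq]
  have h1 : 1 ≤ (2 * r + 1) * u + (2 * r + 1) :=
    le_trans (by omega) (Nat.le_add_left _ _)
  zify [h1]
  ring

end Mv5


/-- Odd-characteristic example, blowups (3): `k`-fold iteration of the
monomial `v`-chart point blowup `σ_v` (`z ↦ vz`, `x ↦ vx`, `y ↦ vy`, `v ↦ v`, `w ↦ vw`).
Variables: `z = X 0`, `x = X 1`, `y = X 2`, `v = X 3`, `w = X 4`.  In particular, for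
`k = m = 2d/(p−1) + p − 1` the `v`-exponent in the first term of the parenthesis is
`m(p−1)/2 = d + (p−1)²/2`. -/
theorem oddp_third_blowups (p : ℕ) (hp : p.Prime) (hpodd : Odd p)
    (K : Type*) [Field K]
    (d a s : ℕ) (hd1 : 1 ≤ d) (hddvd : p * (p - 1) / 2 ∣ d) (hs1 : 1 ≤ s)
    (hs : d ≤ s * p ^ 3)
    (d' m : ℕ) (hd' : d' = d + p * (p - 1) / 2) (hm : m = 2 * d / (p - 1) + p - 1)
    (B A : MvPowerSeries (Fin 5) K) (hBz : avoids 0 B) (hAz : avoids 0 A)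
    (hB : constantCoeff B ≠ 0) (hA : constantCoeff A ≠ 0)
    (f : MvPowerSeries (Fin 5) K)
    (hf : f = X 0 ^ p ^ 3 +
        X 1 ^ (a * p ^ 3 + (p ^ 3 - p ^ 2) / 2) * X 4 ^ (s * p ^ 3 - d) *
        (X 2 ^ p ^ 2 * X 4 ^ d * B + X 1 ^ (d' + (p ^ 2 + 1) / 2) * A))
    (σᵥ : MvPowerSeries (Fin 5) K → MvPowerSeries (Fin 5) K)
    (hσ : σᵥ = psSubst ![X 3 * X 0, X 3 * X 1, X 3 * X 2, X 3, X 3 * X 4]) :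
    (∀ k : ℕ,
      σᵥ^[k] f = X 3 ^ (k * p ^ 3) * (X 0 ^ p ^ 3 +
        X 1 ^ (a * p ^ 3 + (p ^ 3 - p ^ 2) / 2) *
          X 3 ^ (k * ((a + s - 1) * p ^ 3 + (p ^ 3 + p ^ 2 - p + 1) / 2)) *
          X 4 ^ (s * p ^ 3 - d) *
          (X 2 ^ p ^ 2 * X 3 ^ (k * ((p - 1) / 2)) * X 4 ^ d * σᵥ^[k] B +
            X 1 ^ (d' + (p ^ 2 + 1) / 2) * σᵥ^[k] A)) ∧
      constantCoeff (σᵥ^[k] B) ≠ 0 ∧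
      constantCoeff (σᵥ^[k] A) ≠ 0) ∧
    m * ((p - 1) / 2) = d + (p - 1) ^ 2 / 2 := by
  have hσ' : σᵥ = psSubst (Mv5.S K) := hσ
  subst hd' hm hf
  obtain ⟨key1, key2⟩ := Mv5.oddp_arith p d a s hp hpodd hs1 hs
  refine ⟨?_, Mv5.oddp_marith p d hp hpodd hddvd⟩
  have hBk : ∀ k, constantCoeff (σᵥ^[k] B) = constantCoeff B := by
    intro k
    induction k with
    | zero => rfl
    | succ n ih =>
      rw [Function.iterate_succ_apply', hσ', Mv5.constantCoeff_psSubst, ← hσ', ih]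
  have hAk : ∀ k, constantCoeff (σᵥ^[k] A) = constantCoeff A := by
    intro k
    induction k with
    | zero => rfl
    | succ n ih =>
      rw [Function.iterate_succ_apply', hσ', Mv5.constantCoeff_psSubst, ← hσ', ih]
  intro k
  refine ⟨?_, by rw [hBk]; exact hB, by rw [hAk]; exact hA⟩
  induction k with
  | zero =>
    simp only [Function.iterate_zero, id_eq, Nat.zero_mul, pow_zero, one_mul, mul_one]
  | succ n ih =>
    rw [Function.iterate_succ_apply', ih, hσ', Mv5.expand_form, Mv5.psSubst_add,
      Mv5.psSubst_add]
    simp only [Mv5.psSubst_X3_mul, Mv5.psSubst_X0_mul, Mv5.psSubst_X1_mul,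
      Mv5.psSubst_X2_mul, Mv5.psSubst_X4_mul, Mv5.psSubst_one]
    rw [← Function.iterate_succ_apply' (psSubst (Mv5.S K)) n B,
      ← Function.iterate_succ_apply' (psSubst (Mv5.S K)) n A]
    exact Mv5.step_core (X 0) (X 1) (X 2) (X 3) (X 4) _ _ (p ^ 3) (p ^ 2)
      (a * p ^ 3 + (p ^ 3 - p ^ 2) / 2)
      ((a + s - 1) * p ^ 3 + (p ^ 3 + p ^ 2 - p + 1) / 2)
      (s * p ^ 3 - d) ((p - 1) / 2)
      (d + p * (p - 1) / 2 + (p ^ 2 + 1) / 2) d n key1 key2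
end
end

section
/- Let p be an odd prime, K a field, R = K[[z,x,y,v,w]]. Let d′ ≥ 1, a ≥ 0, b ≥ 1, s ≥ 1 be integers with b·p³ ≥ (p³−1)/2 and s·p³ ≥ d′. Let λ ∈ K∖{0}, let C ∈ K[[x,y,v,w]] be a power series every monomial of which involves the variable y, and let A ∈ K[[x,y,v,w]] be a unit. Set f = z^{p³} + x^{ap³+(p³−p²)/2} y^{bp³−(p³−1)/2} w^{sp³−d′}·( y^{(p²−1)/2} w^{d′}·(λ + C) + x^{d′+(p²+1)/2}·A ). Let σ_v : R → R be the monomial v-chart substitution z↦vz, x↦vx, y↦vy, v↦v, w↦vw. Then for every integer k ≥ 0 there exist Q_k ∈ K[[x,y,v,w]] and a unit A_k such that σ_v^{k}(f) = v^{kp³}·( z^{p³} + x^{ap³+(p³−p²)/2} y^{bp³−(p³−1)/2} v^{k(a+b+s−1)p³} w^{sp³−d′}·( y^{(p²−1)/2} w^{d′}·(λ + v^{k}·Q_k) + x^{d′+(p²+1)/2} v^{k}·A_k ) ). In particular, for k = q′ := (p+1)(d′+p²−1)/2 this series has exactly the starting form of the cycle with d replaced by d′ = d + p(p−1)/2; hence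 the cycle of blowups can be iterated indefinitely and the residual order (p²−1)/2 + d increases without bound. -/
noncomputable section

open MvPowerSeries

section Aux
open Finsupp
abbrev sV (K : Type*) [Field K] : Fin 5 → MvPowerSeries (Fin 5) K :=
  ![X 3 * X 0, X 3 * X 1, X 3 * X 2, X 3, X 3 * X 4]
def wt (e : Fin 5 →₀ ℕ) : ℕ := e 0 + e 1 + e 2 + e 4
def Tm (d : Fin 5 →₀ ℕ) : Fin 5 →₀ ℕ := d + Finsupp.single 3 (wt d)
def bk (e : Fin 5 →₀ ℕ) : Fin 5 →₀ ℕ := e - Finsupp.single 3 (wt e)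
lemma Tm_apply (d : Fin 5 →₀ ℕ) (i : Fin 5) :
    Tm d i = d i + if (3:Fin 5) = i then wt d else 0 := by
  simp [Tm, Finsupp.single_apply]
lemma bk_apply (e : Fin 5 →₀ ℕ) (i : Fin 5) :
    bk e i = e i - if (3:Fin 5) = i then wt e else 0 := by
  simp [bk, Finsupp.tsub_apply, Finsupp.single_apply]
lemma wt_Tm (d : Fin 5 →₀ ℕ) : wt (Tm d) = wt d := by simp [wt, Tm_apply]
lemma Tm_three (d : Fin 5 →₀ ℕ) : Tm d 3 = d 3 + wt d := by simp [Tm_apply]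
lemma wt_bk (e : Fin 5 →₀ ℕ) : wt (bk e) = wt e := by simp [wt, bk_apply]
lemma bk_Tm (d : Fin 5 →₀ ℕ) : bk (Tm d) = d := by
  ext i; rw [bk_apply, wt_Tm, Tm_apply]; split <;> omega
lemma Tm_bk (e : Fin 5 →₀ ℕ) (h : wt e ≤ e 3) : Tm (bk e) = e := by
  ext i; rw [Tm_apply, wt_bk, bk_apply]
  split
  · next h3 => subst h3; omega
  · omega
lemma wt_add (c d : Fin 5 →₀ ℕ) : wt (c + d) = wt c + wt d := by
  simp [wt]; ring
lemma Tm_add (c d : Fin 5 →₀ ℕ) : Tm (c + d) = Tm c + Tm d := by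
  ext i
  simp only [Tm_apply, wt_add, Finsupp.add_apply]
  split <;> omega
variable {K : Type*} [Field K]
lemma prod_sV (d : Fin 5 →₀ ℕ) :
    (∏ i, sV K i ^ d i) = monomial (Tm d) 1 := by
  rw [Fin.prod_univ_five]
  simp only [sV, Matrix.cons_val_zero, Matrix.cons_val_one, Matrix.head_cons,
    Matrix.cons_val_two, Matrix.tail_cons, Matrix.cons_val_three, Matrix.cons_val_four,
    Matrix.head_fin_const]
  rw [mul_pow, mul_pow, mul_pow, mul_pow]
  simp only [X_pow_eq, monomial_mul_monomial, one_mul, mul_one]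
  apply congrArg (fun E : Fin 5 →₀ ℕ => monomial E 1)
  ext i
  fin_cases i <;> simp [Tm_apply, wt, Finsupp.single_apply] <;> omega
lemma apply_le_sum (e : Fin 5 →₀ ℕ) (i : Fin 5) : e i ≤ e.sum fun _ k => k := by
  by_cases h : e i = 0
  · omega
  · exact Finset.single_le_sum (fun j _ => Nat.zero_le _) (Finsupp.mem_support_iff.mpr h)

lemma coeff_sV (f : MvPowerSeries (Fin 5) K) (e : Fin 5 →₀ ℕ) :
    coeff e (psSubst (sV K) f) =
      if wt e ≤ e 3 then coeff (bk e) f else 0 := by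
  rw [show coeff e (psSubst (sV K) f) = psSubst (sV K) f e from rfl]
  unfold psSubst
  have hterm : ∀ d : Fin 5 →₀ ℕ,
      coeff d f * coeff e (∏ i, sV K i ^ d i) =
      if e = Tm d then coeff d f else 0 := by
    intro d
    rw [prod_sV, coeff_monomial]
    split <;> simp
  simp only [hterm]
  by_cases h : wt e ≤ e 3
  · rw [if_pos h, Finset.sum_eq_single (bk e)]
    · rw [if_pos (Tm_bk e h).symm]
    · intro d _ hd
      rw [if_neg]
      intro he
      exact hd (by rw [he, bk_Tm])
    · intro hmem
      exact absurd (Finset.mem_Iic.mpr (fun i => by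
        simp only [Finsupp.equivFunOnFinite_symm_apply_apply]
        exact le_trans (by rw [bk_apply]; omega) (apply_le_sum e i))) hmem
  · rw [if_neg h]
    apply Finset.sum_eq_zero
    intro d _
    rw [if_neg]
    intro he
    apply h
    rw [he, wt_Tm, Tm_three]
    omega

lemma psSubst_sV_add (f g : MvPowerSeries (Fin 5) K) :
    psSubst (sV K) (f + g) = psSubst (sV K) f + psSubst (sV K) g := by
  ext e
  rw [map_add, coeff_sV, coeff_sV, coeff_sV, map_add]
  split <;> simp

lemma psSubst_sV_monomial (d : Fin 5 →₀ ℕ) (c : K) :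
    psSubst (sV K) (monomial d c) = monomial (Tm d) c := by
  ext e
  rw [coeff_sV, coeff_monomial, coeff_monomial]
  by_cases h : wt e ≤ e 3
  · rw [if_pos h]
    by_cases hd : bk e = d
    · rw [if_pos hd, if_pos (by rw [← hd, Tm_bk e h])]
    · rw [if_neg hd, if_neg (fun he => hd (by rw [he, bk_Tm]))]
  · rw [if_neg h, if_neg]
    intro he
    apply h
    rw [he, wt_Tm, Tm_three]; omega

lemma psSubst_sV_mul (f g : MvPowerSeries (Fin 5) K) :
    psSubst (sV K) (f * g) = psSubst (sV K) f * psSubst (sV K) g := by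
  classical
  ext e
  rw [coeff_sV]
  conv_rhs => rw [coeff_mul]
  have hterm : ∀ q : (Fin 5 →₀ ℕ) × (Fin 5 →₀ ℕ),
      coeff q.1 (psSubst (sV K) f) * coeff q.2 (psSubst (sV K) g) =
      if wt q.1 ≤ q.1 3 ∧ wt q.2 ≤ q.2 3 then coeff (bk q.1) f * coeff (bk q.2) g
      else 0 := by
    intro q
    rw [coeff_sV, coeff_sV]
    split_ifs with h1 h2 h3 h4 h5 <;> first | rfl | tauto | simp
  simp only [hterm]
  rw [← Finset.sum_filter]
  by_cases h : wt e ≤ e 3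
  · rw [if_pos h, coeff_mul]
    refine (Finset.sum_nbij' (fun q => (Tm q.1, Tm q.2)) (fun q => (bk q.1, bk q.2))
      ?_ ?_ ?_ ?_ ?_)
    · intro q hq
      rw [Finset.HasAntidiagonal.mem_antidiagonal] at hq
      rw [Finset.mem_filter, Finset.HasAntidiagonal.mem_antidiagonal]
      refine ⟨?_, ⟨?_, ?_⟩⟩
      · rw [← Tm_add, hq, Tm_bk e h]
      · rw [wt_Tm, Tm_three]; omega
      · rw [wt_Tm, Tm_three]; omega
    · intro q hq
      rw [Finset.mem_filter, Finset.HasAntidiagonal.mem_antidiagonal] at hq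
      obtain ⟨hsum, h1, h2⟩ := hq
      rw [Finset.HasAntidiagonal.mem_antidiagonal]
      have : Tm (bk q.1 + bk q.2) = Tm (bk e) := by
        rw [Tm_add, Tm_bk _ h1, Tm_bk _ h2, hsum, Tm_bk e h]
      have := congrArg bk this
      rwa [bk_Tm, bk_Tm] at this
    · intro q hq
      simp only [bk_Tm]
    · intro q hq
      rw [Finset.mem_filter, Finset.HasAntidiagonal.mem_antidiagonal] at hq
      obtain ⟨_, h1, h2⟩ := hq
      simp only [Tm_bk _ h1, Tm_bk _ h2]
    · intro q hq
      simp only [bk_Tm]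
  · rw [if_neg h]
    symm
    apply Finset.sum_eq_zero
    intro q hq
    rw [Finset.mem_filter, Finset.HasAntidiagonal.mem_antidiagonal] at hq
    obtain ⟨hsum, h1, h2⟩ := hq
    exact absurd (by rw [← hsum, wt_add, Finsupp.add_apply]; omega) h

lemma Tm_single_ne (i : Fin 5) (hi : i ≠ 3) (n : ℕ) :
    Tm (Finsupp.single i n) = Finsupp.single 3 n + Finsupp.single i n := by
  have hw : wt (Finsupp.single i n) = n := by
    fin_cases i <;> simp [wt, Finsupp.single_apply] <;> simp_all
  ext j
  rw [Tm_apply, Finsupp.add_apply, Finsupp.single_apply, Finsupp.single_apply, hw]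
  split <;> omega

lemma psSubst_sV_X_pow (i : Fin 5) (hi : i ≠ 3) (n : ℕ) :
    psSubst (sV K) ((X i : MvPowerSeries (Fin 5) K) ^ n) = X 3 ^ n * X i ^ n := by
  simp only [X_pow_eq]
  rw [psSubst_sV_monomial, monomial_mul_monomial, one_mul, Tm_single_ne i hi]

lemma psSubst_sV_X3_pow (n : ℕ) :
    psSubst (sV K) ((X 3 : MvPowerSeries (Fin 5) K) ^ n) = X 3 ^ n := by
  simp only [X_pow_eq]
  rw [psSubst_sV_monomial]
  apply congrArg (fun E : Fin 5 →₀ ℕ => monomial E 1)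
  ext j
  rw [Tm_apply]
  have : wt (Finsupp.single (3:Fin 5) n) = 0 := by simp [wt, Finsupp.single_apply]
  rw [this]
  split <;> omega

lemma psSubst_sV_C (c : K) :
    psSubst (sV K) (C c) = C c := by
  rw [← monomial_zero_eq_C_apply, psSubst_sV_monomial]
  apply congrArg (fun E : Fin 5 →₀ ℕ => monomial E c)
  ext j
  rw [Tm_apply]
  have : wt (0 : Fin 5 →₀ ℕ) = 0 := by simp [wt]
  rw [this]
  split <;> simp

lemma bk_apply02 (e : Fin 5 →₀ ℕ) : bk e 0 = e 0 ∧ bk e 2 = e 2 := by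
  constructor <;> rw [bk_apply] <;> simp

lemma factor_X3 (g : MvPowerSeries (Fin 5) K) (h : ∀ e, coeff e g ≠ 0 → e 3 ≠ 0) :
    ∃ g' : MvPowerSeries (Fin 5) K, g = X 3 * g' ∧
      ∀ e, coeff e g' = coeff (e + Finsupp.single 3 1) g := by
  classical
  refine ⟨fun e => coeff (e + Finsupp.single 3 1) g, ?_, fun e => rfl⟩
  ext e
  rw [X]; erw [coeff_monomial_mul]
  by_cases he : Finsupp.single (3 : Fin 5) 1 ≤ e
  · rw [if_pos he, one_mul]
    rw [show coeff (e - Finsupp.single 3 1) (fun e => coeff (e + Finsupp.single 3 1) g)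
      = coeff (e - Finsupp.single 3 1 + Finsupp.single 3 1) g from rfl]
    have h3 : 1 ≤ e 3 := by
      have := he 3; simpa using this
    have hidx : e - Finsupp.single 3 1 + Finsupp.single 3 1 = e := by
      ext j
      rw [Finsupp.add_apply, Finsupp.tsub_apply, Finsupp.single_apply]
      split
      · next hj => subst hj; omega
      · omega
    rw [hidx]
  · rw [if_neg he]
    by_contra hc
    apply he
    have h3 := h e hc
    intro j
    rw [Finsupp.single_apply]
    split
    · next hj => subst hj; omega
    · omega

lemma sV_avoids0 (g : MvPowerSeries (Fin 5) K)
    (h : ∀ e : Fin 5 →₀ ℕ, e 0 ≠ 0 → coeff e g = 0) :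
    ∀ e : Fin 5 →₀ ℕ, e 0 ≠ 0 → coeff e (psSubst (sV K) g) = 0 := by
  intro e he
  rw [coeff_sV]
  split
  · exact h _ (by rw [(bk_apply02 e).1]; exact he)
  · rfl

lemma sV_constantCoeff (g : MvPowerSeries (Fin 5) K) :
    constantCoeff (psSubst (sV K) g) = constantCoeff g := by
  rw [← coeff_zero_eq_constantCoeff, coeff_sV]
  rw [if_pos (by simp [wt])]
  have hbk : bk (0 : Fin 5 →₀ ℕ) = 0 := by
    ext j; rw [bk_apply]; simp [wt]
  rw [hbk]

lemma step_Q (g : MvPowerSeries (Fin 5) K)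
    (h0 : ∀ e : Fin 5 →₀ ℕ, e 0 ≠ 0 → coeff e g = 0)
    (h2 : ∀ e : Fin 5 →₀ ℕ, coeff e g ≠ 0 → e 2 ≠ 0) :
    ∃ g' : MvPowerSeries (Fin 5) K, psSubst (sV K) g = X 3 * g' ∧
      (∀ e : Fin 5 →₀ ℕ, e 0 ≠ 0 → coeff e g' = 0) ∧
      (∀ e : Fin 5 →₀ ℕ, coeff e g' ≠ 0 → e 2 ≠ 0) := by
  have hdiv : ∀ e : Fin 5 →₀ ℕ, coeff e (psSubst (sV K) g) ≠ 0 → e 3 ≠ 0 := by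
    intro e hc
    rw [coeff_sV] at hc
    by_cases hcond : wt e ≤ e 3
    · rw [if_pos hcond] at hc
      have := h2 _ hc
      rw [(bk_apply02 e).2] at this
      have : 1 ≤ wt e := by unfold wt; omega
      omega
    · rw [if_neg hcond] at hc; exact absurd rfl hc
  obtain ⟨g', hfac, hco⟩ := factor_X3 _ hdiv
  refine ⟨g', hfac, ?_, ?_⟩
  · intro e he
    rw [hco]
    apply sV_avoids0 g h0
    rw [Finsupp.add_apply, Finsupp.single_apply]
    simpa using he
  · intro e hc
    rw [hco, coeff_sV] at hc
    split at hc
    · have := h2 _ hc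
      rw [(bk_apply02 _).2] at this
      rw [Finsupp.add_apply, Finsupp.single_apply] at this
      simpa using this
    · exact absurd rfl hc

lemma key_alg {R : Type*} [CommRing R] (z x y v w c q av : R)
    (P g1 α β δ ε ζ D k : ℕ)
    (h1 : α + β + δ + (ε + D) = P + g1 * P)
    (h2 : α + β + δ + ζ = P + g1 * P + 1) :
    v^(k*P) * (v^P * z^P + (v^α * x^α) * (v^β * y^β) * v^(k*g1*P) * (v^δ * w^δ) *
      ((v^ε * y^ε) * (v^D * w^D) * (c + v^k * (v * q)) + (v^ζ * x^ζ) * v^k * av))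
    = v^((k+1)*P) * (z^P + x^α * y^β * v^((k+1)*g1*P) * w^δ *
      (y^ε * w^D * (c + v^(k+1) * q) + x^ζ * v^(k+1) * av)) := by
  have hA : (v:R)^α * v^β * v^δ * (v^ε * v^D) = v^P * v^(g1*P) := by
    calc (v:R)^α * v^β * v^δ * (v^ε * v^D) = v^(α+β+δ+(ε+D)) := by ring
    _ = v^(P+g1*P) := by rw [h1]
    _ = v^P * v^(g1*P) := by ring
  have hB : (v:R)^α * v^β * v^δ * v^ζ = v^P * v^(g1*P) * v := by
    calc (v:R)^α * v^β * v^δ * v^ζ = v^(α+β+δ+ζ) := by ring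
    _ = v^(P+g1*P+1) := by rw [h2]
    _ = v^P * v^(g1*P) * v := by ring
  calc v^(k*P) * (v^P * z^P + (v^α * x^α) * (v^β * y^β) * v^(k*g1*P) * (v^δ * w^δ) *
      ((v^ε * y^ε) * (v^D * w^D) * (c + v^k * (v * q)) + (v^ζ * x^ζ) * v^k * av))
      = ((v:R)^α * v^β * v^δ * (v^ε * v^D)) *
          (v^(k*P) * v^(k*g1*P) * (x^α * y^β * w^δ) * (y^ε * w^D * (c + v^k * (v * q))))
        + ((v:R)^α * v^β * v^δ * v^ζ) *
          (v^(k*P) * v^(k*g1*P) * v^k * (x^α * y^β * w^δ) * (x^ζ * av))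
        + v^(k*P) * v^P * z^P := by ring
    _ = (v^P * v^(g1*P)) *
          (v^(k*P) * v^(k*g1*P) * (x^α * y^β * w^δ) * (y^ε * w^D * (c + v^k * (v * q))))
        + (v^P * v^(g1*P) * v) *
          (v^(k*P) * v^(k*g1*P) * v^k * (x^α * y^β * w^δ) * (x^ζ * av))
        + v^(k*P) * v^P * z^P := by rw [hA, hB]
    _ = v^((k+1)*P) * (z^P + x^α * y^β * v^((k+1)*g1*P) * w^δ *
      (y^ε * w^D * (c + v^(k+1) * q) + x^ζ * v^(k+1) * av)) := by ring

end Aux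

/-- Odd-characteristic example, blowups (6): `k`-fold iteration of the
monomial `v`-chart point blowup `σ_v` (`z ↦ vz`, `x ↦ vx`, `y ↦ vy`, `v ↦ v`, `w ↦ vw`).
Variables: `z = X 0`, `x = X 1`, `y = X 2`, `v = X 3`, `w = X 4`.  For
`k = q′ = (p+1)(d′+p²−1)/2` the result has exactly the starting form of the cycle with
`d` replaced by `d′ = d + p(p−1)/2`; hence the cycle can be iterated indefinitely and
the residual order `(p²−1)/2 + d` increases without bound. -/
theorem oddp_sixth_blowups (p : ℕ) (hp : p.Prime) (hpodd : Odd p)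
    (K : Type*) [Field K]
    (d' a b s : ℕ) (hd'1 : 1 ≤ d') (hb1 : 1 ≤ b) (hs1 : 1 ≤ s)
    (hb : (p ^ 3 - 1) / 2 ≤ b * p ^ 3) (hs : d' ≤ s * p ^ 3)
    (lam : K) (hlam : lam ≠ 0)
    (Cs A : MvPowerSeries (Fin 5) K) (hCz : avoids 0 Cs) (hAz : avoids 0 A)
    (hC : ∀ e : Fin 5 →₀ ℕ, MvPowerSeries.coeff e Cs ≠ 0 → e 2 ≠ 0)
    (hA : constantCoeff A ≠ 0)
    (f : MvPowerSeries (Fin 5) K)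
    (hf : f = X 0 ^ p ^ 3 +
        X 1 ^ (a * p ^ 3 + (p ^ 3 - p ^ 2) / 2) * X 2 ^ (b * p ^ 3 - (p ^ 3 - 1) / 2) *
          X 4 ^ (s * p ^ 3 - d') *
          (X 2 ^ ((p ^ 2 - 1) / 2) * X 4 ^ d' * (C lam + Cs) +
            X 1 ^ (d' + (p ^ 2 + 1) / 2) * A))
    (σᵥ : MvPowerSeries (Fin 5) K → MvPowerSeries (Fin 5) K)
    (hσ : σᵥ = psSubst ![X 3 * X 0, X 3 * X 1, X 3 * X 2, X 3, X 3 * X 4]) :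
    ∀ k : ℕ, ∃ Qk Ak : MvPowerSeries (Fin 5) K,
      avoids 0 Qk ∧ avoids 0 Ak ∧ constantCoeff Ak ≠ 0 ∧
      σᵥ^[k] f = X 3 ^ (k * p ^ 3) * (X 0 ^ p ^ 3 +
        X 1 ^ (a * p ^ 3 + (p ^ 3 - p ^ 2) / 2) * X 2 ^ (b * p ^ 3 - (p ^ 3 - 1) / 2) *
          X 3 ^ (k * (a + b + s - 1) * p ^ 3) * X 4 ^ (s * p ^ 3 - d') *
          (X 2 ^ ((p ^ 2 - 1) / 2) * X 4 ^ d' * (C lam + X 3 ^ k * Qk) +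
            X 1 ^ (d' + (p ^ 2 + 1) / 2) * X 3 ^ k * Ak)) := by
  subst hσ
  -- arithmetic preliminaries
  obtain ⟨u, hu⟩ := hpodd
  have hP2 : p ^ 2 = 2 * (2*u^2 + 2*u) + 1 := by subst hu; ring
  have hP3 : p ^ 3 = 2 * ((2*u^2 + 2*u) + (4*u^3 + 4*u^2 + u)) + 1 := by subst hu; ring
  set m2 : ℕ := 2*u^2 + 2*u with hm2
  set m3 : ℕ := m2 + (4*u^3 + 4*u^2 + u) with hm3
  have e2 : (p ^ 2 - 1) / 2 = m2 := by rw [hP2]; omega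
  have e3 : (p ^ 3 - 1) / 2 = m3 := by rw [hP3]; omega
  have e23 : (p ^ 3 - p ^ 2) / 2 = m3 - m2 := by rw [hP3, hP2]; omega
  have e2p : (p ^ 2 + 1) / 2 = m2 + 1 := by rw [hP2]; omega
  have hm2le : m2 ≤ m3 := Nat.le_add_right _ _
  have hb' : m3 ≤ b * p ^ 3 := by rw [← e3]; exact hb
  have hPG : p ^ 3 + (a+b+s-1) * p ^ 3 = a * p ^ 3 + b * p ^ 3 + s * p ^ 3 := by
    have hone : a+b+s-1+1 = a+b+s := by omega
    calc p ^ 3 + (a+b+s-1) * p ^ 3 = (a+b+s-1+1) * p ^ 3 := by ring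
      _ = (a+b+s) * p ^ 3 := by rw [hone]
      _ = a * p ^ 3 + b * p ^ 3 + s * p ^ 3 := by ring
  have h1 : (a * p ^ 3 + (p ^ 3 - p ^ 2) / 2) + (b * p ^ 3 - (p ^ 3 - 1) / 2) +
      (s * p ^ 3 - d') + ((p ^ 2 - 1) / 2 + d') = p ^ 3 + (a+b+s-1) * p ^ 3 := by
    rw [e23, e3, e2]
    generalize hG0 : (a+b+s-1) * p ^ 3 = G0 at hPG ⊢
    generalize hA1 : a * p ^ 3 = A1 at hPG ⊢
    generalize hB1 : b * p ^ 3 = B1 at hPG hb' ⊢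
    generalize hS1 : s * p ^ 3 = S1 at hPG hs ⊢
    generalize hP0 : p ^ 3 = P0 at hPG ⊢
    omega
  have h2 : (a * p ^ 3 + (p ^ 3 - p ^ 2) / 2) + (b * p ^ 3 - (p ^ 3 - 1) / 2) +
      (s * p ^ 3 - d') + (d' + (p ^ 2 + 1) / 2) = p ^ 3 + (a+b+s-1) * p ^ 3 + 1 := by
    rw [e23, e3, e2p]
    generalize hG0 : (a+b+s-1) * p ^ 3 = G0 at hPG ⊢
    generalize hA1 : a * p ^ 3 = A1 at hPG ⊢
    generalize hB1 : b * p ^ 3 = B1 at hPG hb' ⊢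
    generalize hS1 : s * p ^ 3 = S1 at hPG hs ⊢
    generalize hP0 : p ^ 3 = P0 at hPG ⊢
    omega
  -- strengthened induction
  suffices H : ∀ k : ℕ, ∃ Qk Ak : MvPowerSeries (Fin 5) K,
      (avoids 0 Qk ∧ ∀ e : Fin 5 →₀ ℕ, coeff e Qk ≠ 0 → e 2 ≠ 0) ∧
      avoids 0 Ak ∧ constantCoeff Ak ≠ 0 ∧
      (psSubst (sV K))^[k] f = X 3 ^ (k * p ^ 3) * (X 0 ^ p ^ 3 +
        X 1 ^ (a * p ^ 3 + (p ^ 3 - p ^ 2) / 2) * X 2 ^ (b * p ^ 3 - (p ^ 3 - 1) / 2) *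
          X 3 ^ (k * (a + b + s - 1) * p ^ 3) * X 4 ^ (s * p ^ 3 - d') *
          (X 2 ^ ((p ^ 2 - 1) / 2) * X 4 ^ d' * (C lam + X 3 ^ k * Qk) +
            X 1 ^ (d' + (p ^ 2 + 1) / 2) * X 3 ^ k * Ak)) by
    intro k
    obtain ⟨Qk, Ak, ⟨hQ0, _⟩, hAk0, hAkc, hEq⟩ := H k
    exact ⟨Qk, Ak, hQ0, hAk0, hAkc, hEq⟩
  intro k
  induction k with
  | zero =>
    refine ⟨Cs, A, ⟨hCz, hC⟩, hAz, hA, ?_⟩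
    rw [Function.iterate_zero_apply, hf]
    ring
  | succ k ih =>
    obtain ⟨Q, Ak, ⟨hQ0, hQ2⟩, hAk0, hAkc, hEq⟩ := ih
    obtain ⟨Q', hQfac, hQ'0, hQ'2⟩ := step_Q Q hQ0 hQ2
    refine ⟨Q', psSubst (sV K) Ak, ⟨hQ'0, hQ'2⟩, sV_avoids0 _ hAk0, ?_, ?_⟩
    · rw [sV_constantCoeff]; exact hAkc
    · rw [Function.iterate_succ_apply', hEq]
      refine Eq.trans ?_ (key_alg (X 0) (X 1) (X 2) (X 3) (X 4)
        (C lam) Q' (psSubst (sV K) Ak) (p ^ 3) (a+b+s-1)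
        (a * p ^ 3 + (p ^ 3 - p ^ 2) / 2) (b * p ^ 3 - (p ^ 3 - 1) / 2)
        (s * p ^ 3 - d') ((p ^ 2 - 1) / 2) (d' + (p ^ 2 + 1) / 2) d' k h1 h2)
      simp only [psSubst_sV_mul, psSubst_sV_add, psSubst_sV_X3_pow, psSubst_sV_C,
        psSubst_sV_X_pow 0 (by decide), psSubst_sV_X_pow 1 (by decide),
        psSubst_sV_X_pow 2 (by decide), psSubst_sV_X_pow 4 (by decide), hQfac]
end
end
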